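/- arXiv:2402.07146 — 6 statements merged into one kernel-verified Lean document; each statement's English description precedes it below -/
import Mathlib

section
/- Let q be a prime power and B a nonzero polynomial in F_q[t]. For every real ε > 0 and every integer R ≥ 0, the number of monic polynomials r ∈ F_q[t] of degree R all of whose prime (irreducible) factors divide B is O_ε((q^R · q^{deg B})^ε). -/
open scoped Classical

open Polynomial UniqueFactorizationMonoid Finset

private lemma aux_geom_sum_le {x : ℝ} (h0 : 0 ≤ x) (h1 : x < 1) (n : ℕ) :
    ∑ i ∈ Finset.range n, x ^ i ≤ (1 - x)⁻¹ := by
  have hx : 0 < 1 - x := by linarith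
  have hxn : (0:ℝ) ≤ x ^ n := pow_nonneg h0 n
  rw [geom_sum_eq h1.ne]
  rw [div_le_iff_of_neg (by linarith : x - 1 < 0)]
  have h2 : (1 - x)⁻¹ * (x - 1) = -1 := by
    field_simp
    ring
  rw [h2]; linarith

private lemma aux_keyB {X : ℝ} (h2 : 2 ≤ X) : (1 - X⁻¹)⁻¹ ≤ X := by
  have hX0 : (0:ℝ) < X := by linarith
  have hXi : X⁻¹ ≤ 2⁻¹ := by
    apply inv_anti₀ <;> linarith
  calc (1 - X⁻¹)⁻¹ ≤ ((2:ℝ)⁻¹)⁻¹ := by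
        apply inv_anti₀
        · norm_num
        · norm_num at hXi ⊢; linarith
    _ = 2 := by norm_num
    _ ≤ X := h2

private lemma aux_keyA {ε : ℝ} (hε : 0 < ε) {q : ℕ} (hq : 2 ≤ q) {d : ℕ} (hd : 1 ≤ d) :
    (1 - (q:ℝ) ^ (-(ε * (d:ℝ))))⁻¹ ≤ (ε * Real.log 2)⁻¹ * (q:ℝ) ^ (ε * (d:ℝ)) := by
  have hq1 : (1:ℝ) < q := by exact_mod_cast hq
  have hq0 : (0:ℝ) < q := by linarith
  have hd1 : (1:ℝ) ≤ (d:ℝ) := by exact_mod_cast hd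
  set X : ℝ := (q:ℝ) ^ (ε * (d:ℝ)) with hXdef
  have hXpos : 0 < X := Real.rpow_pos_of_pos hq0 _
  have hlog2 : (0:ℝ) < Real.log 2 := Real.log_pos one_lt_two
  have hlogq : Real.log 2 ≤ Real.log q := Real.log_le_log two_pos (by exact_mod_cast hq)
  have hX : 1 + ε * Real.log 2 ≤ X := by
    have h1 : X = Real.exp (Real.log q * (ε * d)) := by
      rw [hXdef, Real.rpow_def_of_pos hq0]
    have h2 : Real.log q * (ε * d) + 1 ≤ X := by
      rw [h1]; exact Real.add_one_le_exp _
    nlinarith [mul_nonneg hε.le (mul_nonneg (sub_nonneg.mpr hd1) (lt_of_lt_of_le hlog2 hlogq).le),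
      mul_nonneg hε.le (sub_nonneg.mpr hlogq)]
  have hXinv : (q:ℝ) ^ (-(ε * (d:ℝ))) = X⁻¹ := by
    rw [hXdef, ← Real.rpow_neg hq0.le]
  rw [hXinv]
  have h3 : 1 - X⁻¹ = (X - 1) / X := by
    field_simp
  rw [h3, inv_div]
  rw [div_le_iff₀ (by nlinarith : (0:ℝ) < X - 1)]
  have h4 : (ε * Real.log 2)⁻¹ * X * (X - 1) = ((X - 1) / (ε * Real.log 2)) * X := by
    ring
  rw [h4]
  have h5 : (1:ℝ) ≤ (X - 1) / (ε * Real.log 2) := by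
    rw [le_div_iff₀ (by positivity)]
    nlinarith
  nlinarith

private lemma aux_monic_factor {F : Type} [Field F] {r p : Polynomial F}
    (hp : p ∈ normalizedFactors r) : p.Monic := by
  have h0 : p ≠ 0 := (prime_of_normalized_factor p hp).ne_zero
  have h := Polynomial.monic_normalize h0
  rwa [normalize_normalized_factor p hp] at h

private lemma aux_mem_nf {F : Type} [Field F] {B p : Polynomial F} (hB : B ≠ 0)
    (hp : Irreducible p) (hnorm : normalize p = p) (hdvd : p ∣ B) :
    p ∈ normalizedFactors B := by
  obtain ⟨s, hs, hassoc⟩ := exists_mem_normalizedFactors_of_dvd hB hp hdvd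
  have h : normalize p = normalize s :=
    normalize_eq_normalize_iff.mpr ⟨hassoc.dvd, hassoc.symm.dvd⟩
  rw [hnorm, normalize_normalized_factor s hs] at h
  exact h ▸ hs

private lemma aux_monic_eq_prod {F : Type} [Field F] {r : Polynomial F} (hr : r.Monic) :
    (normalizedFactors r).prod = r := by
  have h0 : r ≠ 0 := hr.ne_zero
  have hm : ((normalizedFactors r).map id).prod.Monic :=
    Polynomial.monic_multiset_prod_of_monic _ id (fun p hp => aux_monic_factor hp)
  rw [Multiset.map_id] at hm
  exact Polynomial.eq_of_monic_of_associated hm hr (prod_normalizedFactors h0)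

set_option maxHeartbeats 2000000 in
/-- For every ε > 0 there is a constant C = C(ε) > 0 such that for every
finite field `F_q`, every nonzero `B ∈ F_q[t]`, and every integer `R ≥ 0`, the number of
monic `r ∈ F_q[t]` of degree `R` all of whose monic irreducible factors divide `B`
is at most `C · (q^R · q^{deg B})^ε`. -/
theorem count_divisors_of_B_infty (ε : ℝ) (hε : 0 < ε) :
    ∃ C : ℝ, 0 < C ∧
      ∀ (Fq : Type) [Field Fq] [Fintype Fq] (B : Polynomial Fq), B ≠ 0 → ∀ R : ℕ,
        (Set.ncard {r : Polynomial Fq | r.Monic ∧ r.natDegree = R ∧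
            ∀ p : Polynomial Fq, p.Monic → Irreducible p → p ∣ r → p ∣ B} : ℝ) ≤
          C * ((Fintype.card Fq : ℝ) ^ R * (Fintype.card Fq : ℝ) ^ B.natDegree) ^ ε := by
  classical
  set c : ℝ := max 1 ((ε * Real.log 2)⁻¹) with hc
  have hc1 : (1:ℝ) ≤ c := le_max_left _ _
  set L : ℕ := ⌈1/ε⌉₊ with hL
  set Q : ℕ := ⌈(2:ℝ) ^ (1/ε)⌉₊ with hQ
  set K : ℕ := Q ^ L with hK
  refine ⟨c ^ K, pow_pos (lt_of_lt_of_le one_pos hc1) _, ?_⟩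
  intro Fq _ _ B hB R
  set q : ℕ := Fintype.card Fq with hqdef
  have hq2 : 2 ≤ q := Fintype.one_lt_card
  have hq1R : (1:ℝ) < q := by exact_mod_cast hq2
  have hq0R : (0:ℝ) < q := by linarith
  set T : Finset (Polynomial Fq) := (normalizedFactors B).toFinset with hT
  have hTmonic : ∀ p ∈ T, p.Monic := fun p hp => aux_monic_factor (Multiset.mem_toFinset.mp hp)
  have hTirr : ∀ p ∈ T, Irreducible p :=
    fun p hp => irreducible_of_normalized_factor p (Multiset.mem_toFinset.mp hp)
  have hTd : ∀ p ∈ T, 1 ≤ p.natDegree := fun p hp => (hTirr p hp).natDegree_pos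
  set S : Set (Polynomial Fq) := {r : Polynomial Fq | r.Monic ∧ r.natDegree = R ∧
      ∀ p : Polynomial Fq, p.Monic → Irreducible p → p ∣ r → p ∣ B} with hS
  -- factors of elements of S lie in T
  have hSfac : ∀ r ∈ S, ∀ p ∈ normalizedFactors r, p ∈ T := by
    intro r hr p hp
    obtain ⟨hrm, hrd, hrdvd⟩ := hr
    have hirr := irreducible_of_normalized_factor p hp
    have hmon := aux_monic_factor hp
    have hdvdB := hrdvd p hmon hirr (dvd_of_mem_normalizedFactors hp)
    exact Multiset.mem_toFinset.mpr (aux_mem_nf hB hirr (normalize_normalized_factor p hp) hdvdB)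
  set φ : Polynomial Fq → ({x // x ∈ T} → ℕ) :=
    fun r i => (normalizedFactors r).count i.1 with hφ
  -- degree identity
  have hdeg : ∀ r ∈ S, ∑ i : {x // x ∈ T}, φ r i * (i.1).natDegree = R := by
    intro r hr
    have hrS := hr
    obtain ⟨hrm, hrd, -⟩ := hr
    have h1 : r.natDegree = ((normalizedFactors r).map Polynomial.natDegree).sum := by
      conv_lhs => rw [← aux_monic_eq_prod hrm]
      exact Polynomial.natDegree_multiset_prod_of_monic _ (fun p hp => aux_monic_factor hp)
    rw [Finset.sum_multiset_map_count] at h1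
    have h2 : ∑ p ∈ (normalizedFactors r).toFinset,
        (normalizedFactors r).count p • p.natDegree
        = ∑ p ∈ T, (normalizedFactors r).count p • p.natDegree := by
      apply Finset.sum_subset
      · intro p hp
        exact hSfac r hrS p (Multiset.mem_toFinset.mp hp)
      · intro p _ hpn
        rw [Multiset.count_eq_zero_of_notMem (fun h => hpn (Multiset.mem_toFinset.mpr h)),
          zero_smul]
    have h3 : ∑ i : {x // x ∈ T}, φ r i * (i.1).natDegree
        = ∑ p ∈ T, (normalizedFactors r).count p • p.natDegree := by
      rw [← Finset.sum_coe_sort T (fun p => (normalizedFactors r).count p • p.natDegree)]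
      simp [hφ, smul_eq_mul]
    rw [h3, ← h2, ← h1, hrd]
  -- injectivity
  have hinj : Set.InjOn φ S := by
    intro r1 h1 r2 h2 heq
    have e : normalizedFactors r1 = normalizedFactors r2 := by
      ext p
      by_cases hp : p ∈ T
      · exact congrFun heq ⟨p, hp⟩
      · rw [Multiset.count_eq_zero_of_notMem (fun h => hp (hSfac r1 h1 p h)),
          Multiset.count_eq_zero_of_notMem (fun h => hp (hSfac r2 h2 p h))]
    calc r1 = (normalizedFactors r1).prod := (aux_monic_eq_prod h1.1).symm
      _ = (normalizedFactors r2).prod := by rw [e]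
      _ = r2 := aux_monic_eq_prod h2.1
  -- multiplicities bounded by R
  have hlt : ∀ r ∈ S, ∀ i : {x // x ∈ T}, φ r i < R + 1 := by
    intro r hr i
    have hsum := hdeg r hr
    have h1 : φ r i * (i.1).natDegree ≤ R := by
      rw [← hsum]
      exact Finset.single_le_sum (f := fun j : {x // x ∈ T} => φ r j * (j.1).natDegree)
        (fun j _ => Nat.zero_le _) (Finset.mem_univ i)
    have h2 := hTd i.1 i.2
    have h3 : φ r i ≤ φ r i * (i.1).natDegree := Nat.le_mul_of_pos_right _ h2
    omega
  set F : Finset ({x // x ∈ T} → ℕ) :=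
    Fintype.piFinset (fun _ => Finset.range (R+1)) with hF
  have hmemF : ∀ r ∈ S, φ r ∈ F := fun r hr =>
    Fintype.mem_piFinset.mpr (fun i => Finset.mem_range.mpr (hlt r hr i))
  have hSfin : S.Finite := by
    apply Set.Finite.of_finite_image ?_ hinj
    exact Set.Finite.subset F.finite_toSet (by rintro _ ⟨r, hr, rfl⟩; exact hmemF r hr)
  set θ : ℝ := (q:ℝ) ^ (-ε) with hθ
  have hθ0 : (0:ℝ) < θ := Real.rpow_pos_of_pos hq0R _
  have hθ1 : θ < 1 := Real.rpow_lt_one_of_one_lt_of_neg hq1R (by linarith)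
  -- main counting inequality
  have hcard : (S.ncard : ℝ) * θ ^ R ≤
      ∑ g ∈ F, ∏ i : {x // x ∈ T}, θ ^ (g i * (i.1).natDegree) := by
    have hSsub : hSfin.toFinset.image φ ⊆ F := by
      intro g hg
      obtain ⟨r, hr, rfl⟩ := Finset.mem_image.mp hg
      exact hmemF r (hSfin.mem_toFinset.mp hr)
    have h1 : ∑ g ∈ hSfin.toFinset.image φ, ∏ i : {x // x ∈ T}, θ ^ (g i * (i.1).natDegree)
        ≤ ∑ g ∈ F, ∏ i : {x // x ∈ T}, θ ^ (g i * (i.1).natDegree) :=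
      Finset.sum_le_sum_of_subset_of_nonneg hSsub
        (fun g _ _ => Finset.prod_nonneg fun i _ => pow_nonneg hθ0.le _)
    have h2 : ∑ g ∈ hSfin.toFinset.image φ, ∏ i : {x // x ∈ T}, θ ^ (g i * (i.1).natDegree)
        = (S.ncard : ℝ) * θ ^ R := by
      have hcongr : ∀ g ∈ hSfin.toFinset.image φ,
          ∏ i : {x // x ∈ T}, θ ^ (g i * (i.1).natDegree) = θ ^ R := by
        intro g hg
        obtain ⟨r, hr, rfl⟩ := Finset.mem_image.mp hg
        rw [Finset.prod_pow_eq_pow_sum, hdeg r (hSfin.mem_toFinset.mp hr)]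
      rw [Finset.sum_congr rfl hcongr, Finset.sum_const, nsmul_eq_mul,
        Finset.card_image_of_injOn (by rw [hSfin.coe_toFinset]; exact hinj),
        Set.ncard_eq_toFinset_card S hSfin]
    linarith
  have hprod : ∑ g ∈ F, ∏ i : {x // x ∈ T}, θ ^ (g i * (i.1).natDegree)
      = ∏ i : {x // x ∈ T}, ∑ j ∈ Finset.range (R+1), θ ^ (j * (i.1).natDegree) := by
    rw [hF]
    exact (Finset.prod_univ_sum (fun _ => Finset.range (R+1))
      (fun (i : {x // x ∈ T}) (j : ℕ) => θ ^ (j * (i.1).natDegree))).symm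
  -- geometric bound for each factor
  have hθd : ∀ i : {x // x ∈ T},
      θ ^ (i.1).natDegree = (q:ℝ) ^ (-(ε * ((i.1).natDegree : ℝ))) := by
    intro i
    rw [hθ, ← Real.rpow_natCast ((q:ℝ) ^ (-ε)) _, ← Real.rpow_mul hq0R.le]
    congr 1; ring
  set X : {x // x ∈ T} → ℝ := fun i => (q:ℝ) ^ (ε * ((i.1).natDegree : ℝ)) with hX
  have hXpos : ∀ i, 0 < X i := fun i => Real.rpow_pos_of_pos hq0R _
  have hgi : ∀ i : {x // x ∈ T},
      (∑ j ∈ Finset.range (R+1), θ ^ (j * (i.1).natDegree)) ≤ (1 - θ ^ (i.1).natDegree)⁻¹ := by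
    intro i
    have h1 : ∀ j, θ ^ (j * (i.1).natDegree) = (θ ^ (i.1).natDegree) ^ j :=
      fun j => by rw [mul_comm, pow_mul]
    calc ∑ j ∈ Finset.range (R+1), θ ^ (j * (i.1).natDegree)
        = ∑ j ∈ Finset.range (R+1), (θ ^ (i.1).natDegree) ^ j := by simp_rw [h1]
      _ ≤ (1 - θ ^ (i.1).natDegree)⁻¹ :=
        aux_geom_sum_le (pow_nonneg hθ0.le _)
          (pow_lt_one₀ hθ0.le hθ1 (Nat.one_le_iff_ne_zero.mp (hTd _ i.2))) _
  have hbound : ∀ i : {x // x ∈ T},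
      (1 - θ ^ (i.1).natDegree)⁻¹ ≤ (if X i < 2 then c else 1) * X i := by
    intro i
    by_cases h2 : X i < 2
    · rw [if_pos h2]
      calc (1 - θ ^ (i.1).natDegree)⁻¹
          ≤ (ε * Real.log 2)⁻¹ * X i := by
            rw [hθd i]; exact aux_keyA hε hq2 (hTd i.1 i.2)
        _ ≤ c * X i :=
            mul_le_mul_of_nonneg_right (le_max_right _ _) (hXpos i).le
    · rw [if_neg h2, one_mul]
      have hXi : θ ^ (i.1).natDegree = (X i)⁻¹ := by
        rw [hθd i]
        simp only [hX]
        rw [← Real.rpow_neg hq0R.le]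
      rw [hXi]
      exact aux_keyB (le_of_not_gt h2)
  -- sum of degrees bounded by deg B
  have hsum_d : ∑ i : {x // x ∈ T}, (i.1).natDegree ≤ B.natDegree := by
    have h1 : ∑ i : {x // x ∈ T}, (i.1).natDegree = (∏ p ∈ T, p).natDegree := by
      rw [Polynomial.natDegree_prod _ _ (fun p hp => (hTmonic p hp).ne_zero)]
      exact Finset.sum_coe_sort T (fun p => p.natDegree)
    have h2 : (∏ p ∈ T, p) ∣ B := by
      have h3 : (∏ p ∈ T, p) = (normalizedFactors B).dedup.prod := by
        rw [Finset.prod_eq_multiset_prod]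
        simp [hT, Multiset.toFinset_val, -toFinset_normalizedFactors]
      rw [h3]
      exact (Multiset.prod_dvd_prod_of_le (Multiset.dedup_le _)).trans
        (prod_normalizedFactors hB).dvd
    rw [h1]
    exact Polynomial.natDegree_le_of_dvd h2 hB
  -- product of X i
  have hXprod : ∏ i : {x // x ∈ T}, X i ≤ ((q:ℝ) ^ B.natDegree) ^ ε := by
    have h1 : ∀ i : {x // x ∈ T}, X i = ((q:ℝ) ^ (i.1).natDegree) ^ ε := by
      intro i
      simp only [hX]
      rw [← Real.rpow_natCast (q:ℝ) (i.1).natDegree, ← Real.rpow_mul hq0R.le]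
      congr 1; ring
    calc ∏ i : {x // x ∈ T}, X i
        = ∏ i : {x // x ∈ T}, ((q:ℝ) ^ (i.1).natDegree) ^ ε := by simp_rw [h1]
      _ = (∏ i : {x // x ∈ T}, (q:ℝ) ^ (i.1).natDegree) ^ ε :=
          Real.finset_prod_rpow _ _ (fun i _ => by positivity) _
      _ = ((q:ℝ) ^ (∑ i : {x // x ∈ T}, (i.1).natDegree)) ^ ε := by
          rw [Finset.prod_pow_eq_pow_sum]
      _ ≤ ((q:ℝ) ^ B.natDegree) ^ ε := by
          apply Real.rpow_le_rpow (by positivity) _ hε.le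
          exact pow_le_pow_right₀ hq1R.le hsum_d
  -- bound on the number of small primes
  have hsmall : (Finset.univ.filter (fun i : {x // x ∈ T} => X i < 2)).card ≤ K := by
    by_cases hne : (Finset.univ.filter (fun i : {x // x ∈ T} => X i < 2)).Nonempty
    · obtain ⟨i0, hi0⟩ := hne
      have hqQ : q ≤ Q := by
        have hd0 : (1:ℝ) ≤ ((i0.1).natDegree : ℝ) := by exact_mod_cast hTd i0.1 i0.2
        have h1 : (q:ℝ) ^ (ε : ℝ) ≤ X i0 := by
          simp only [hX]
          apply Real.rpow_le_rpow_of_exponent_le hq1R.le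
          nlinarith
        have h2 : (q:ℝ) ^ (ε : ℝ) < 2 := lt_of_le_of_lt h1 (Finset.mem_filter.mp hi0).2
        have h3 : (q:ℝ) < (2:ℝ) ^ (1/ε) := by
          have h4 := Real.rpow_lt_rpow (Real.rpow_nonneg hq0R.le _) h2
            (by positivity : (0:ℝ) < 1/ε)
          rwa [← Real.rpow_mul hq0R.le, mul_one_div, div_self hε.ne', Real.rpow_one] at h4
        have h5 : (q:ℝ) ≤ (Q:ℝ) := le_trans h3.le (Nat.le_ceil _)
        exact_mod_cast h5
      have hdL : ∀ i ∈ Finset.univ.filter (fun i : {x // x ∈ T} => X i < 2),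
          (i.1).natDegree < L := by
        intro i hi
        have hXi := (Finset.mem_filter.mp hi).2
        rw [hL, Nat.lt_ceil]
        have hlog2 : (0:ℝ) < Real.log 2 := Real.log_pos one_lt_two
        have hlogq : Real.log 2 ≤ Real.log q := Real.log_le_log two_pos (by exact_mod_cast hq2)
        have h4 : Real.log (X i) < Real.log 2 := Real.log_lt_log (hXpos i) hXi
        simp only [hX] at h4
        rw [Real.log_rpow hq0R] at h4
        have hd0 : (1:ℝ) ≤ ((i.1).natDegree : ℝ) := by exact_mod_cast hTd i.1 i.2
        rw [lt_div_iff₀ hε]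
        nlinarith
      have hinj2 : (Finset.univ.filter (fun i : {x // x ∈ T} => X i < 2)).card ≤ q ^ L := by
        have h6 := Finset.card_le_card_of_injOn
          (s := Finset.univ.filter (fun i : {x // x ∈ T} => X i < 2))
          (t := (Finset.univ : Finset (Fin L → Fq)))
          (fun i : {x // x ∈ T} => (fun j : Fin L => (i.1).coeff j))
          (fun i _ => Finset.mem_univ _) ?_
        · calc (Finset.univ.filter (fun i : {x // x ∈ T} => X i < 2)).card
              ≤ (Finset.univ : Finset (Fin L → Fq)).card := h6
            _ = q ^ L := by simp [hqdef]
        · intro a ha b hb heq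
          apply Subtype.ext
          apply Polynomial.ext
          intro n
          by_cases hn : n < L
          · exact congrFun heq ⟨n, hn⟩
          · rw [Polynomial.coeff_eq_zero_of_natDegree_lt
              (lt_of_lt_of_le (hdL a ha) (le_of_not_gt hn)),
              Polynomial.coeff_eq_zero_of_natDegree_lt
              (lt_of_lt_of_le (hdL b hb) (le_of_not_gt hn))]
      exact le_trans hinj2 (by rw [hK]; exact Nat.pow_le_pow_left hqQ L)
    · rw [Finset.not_nonempty_iff_eq_empty.mp hne]
      simp
  -- product of the c-factors
  have hcprod : ∏ i : {x // x ∈ T}, (if X i < 2 then c else 1) ≤ c ^ K := by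
    rw [Finset.prod_ite, Finset.prod_const, Finset.prod_const, one_pow, mul_one]
    exact pow_le_pow_right₀ hc1 hsmall
  -- putting the product bounds together
  have hfinal : ∏ i : {x // x ∈ T}, ∑ j ∈ Finset.range (R+1), θ ^ (j * (i.1).natDegree)
      ≤ c ^ K * ((q:ℝ) ^ B.natDegree) ^ ε := by
    calc ∏ i : {x // x ∈ T}, ∑ j ∈ Finset.range (R+1), θ ^ (j * (i.1).natDegree)
        ≤ ∏ i : {x // x ∈ T}, (if X i < 2 then c else 1) * X i := by
          apply Finset.prod_le_prod
          · intro i _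
            exact Finset.sum_nonneg fun j _ => pow_nonneg hθ0.le _
          · intro i _
            exact (hgi i).trans (hbound i)
      _ = (∏ i : {x // x ∈ T}, (if X i < 2 then c else 1)) * ∏ i : {x // x ∈ T}, X i :=
          Finset.prod_mul_distrib
      _ ≤ c ^ K * ((q:ℝ) ^ B.natDegree) ^ ε := by
          apply mul_le_mul hcprod hXprod (Finset.prod_nonneg fun i _ => (hXpos i).le)
          positivity
  -- conclude
  have hθR : θ ^ R = (((q:ℝ) ^ R) ^ ε)⁻¹ := by
    rw [hθ, ← Real.rpow_natCast ((q:ℝ) ^ (-ε)) R, ← Real.rpow_mul hq0R.le,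
      ← Real.rpow_natCast (q:ℝ) R, ← Real.rpow_mul hq0R.le, ← Real.rpow_neg hq0R.le]
    congr 1; ring
  have hA0 : (0:ℝ) < ((q:ℝ) ^ R) ^ ε := by positivity
  have hmain : (S.ncard : ℝ) * (((q:ℝ) ^ R) ^ ε)⁻¹ ≤ c ^ K * ((q:ℝ) ^ B.natDegree) ^ ε := by
    rw [← hθR]
    calc (S.ncard : ℝ) * θ ^ R
        ≤ ∑ g ∈ F, ∏ i : {x // x ∈ T}, θ ^ (g i * (i.1).natDegree) := hcard
      _ = ∏ i : {x // x ∈ T}, ∑ j ∈ Finset.range (R+1), θ ^ (j * (i.1).natDegree) := hprod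
      _ ≤ c ^ K * ((q:ℝ) ^ B.natDegree) ^ ε := hfinal
  have h7 := mul_le_mul_of_nonneg_right hmain hA0.le
  rw [mul_assoc, inv_mul_cancel₀ hA0.ne', mul_one] at h7
  rw [Real.mul_rpow (by positivity) (by positivity)]
  calc (S.ncard : ℝ) ≤ c ^ K * ((q:ℝ) ^ B.natDegree) ^ ε * ((q:ℝ) ^ R) ^ ε := h7
    _ = c ^ K * (((q:ℝ) ^ R) ^ ε * ((q:ℝ) ^ B.natDegree) ^ ε) := by ring
end

section
/- Farey dissection over F_q((1/t)): let T = {α ∈ F_q((t^{-1})) : |α| < 1} with the absolute value |α| = q^{deg α} induced by t^{-1}. For every integer Q ≥ 1, T is the disjoint union over monic r ∈ F_q[t] with |r| ≤ q^Q and over a ∈ F_q[t] with |a| < |r| and gcd(a,r) = 1 of the sets {α ∈ T : |rα − a| < q^{−Q}}. -/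
open scoped Classical

noncomputable section

/-- `K_∞ = F_q((t⁻¹))`, modelled as formal Laurent series in the variable `X = t⁻¹`. -/
abbrev Kinf (Fq : Type*) [Field Fq] := LaurentSeries Fq

/-- The element `t ∈ K_∞` (the inverse of the Laurent-series variable `X = t⁻¹`). -/
def tElem (Fq : Type*) [Field Fq] : Kinf Fq := (HahnSeries.single (1 : ℤ) (1 : Fq))⁻¹

/-- The natural embedding `F_q[t] → K_∞`, sending `t` to `tElem`. -/
def iota (Fq : Type*) [Field Fq] : Polynomial Fq →+* Kinf Fq :=
  Polynomial.eval₂RingHom HahnSeries.C (tElem Fq)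

/-- The absolute value `|α| = q^{deg α}` on `K_∞ = F_q((t⁻¹))`: if
`α = Σ_{i ≤ M} a_i t^i` with `a_M ≠ 0`, i.e. `α` has `X`-adic order `-M`, then
`|α| = q^M = q^{-ord(α)}`; and `|0| = 0`. -/
def absv (Fq : Type*) [Field Fq] [Fintype Fq] (α : Kinf Fq) : ℝ :=
  if α = 0 then 0 else (Fintype.card Fq : ℝ) ^ (-(HahnSeries.order α))

/-- `|x| = q^{deg x}` on `F_q[t]`, with `|0| = 0`. -/
def polyAbs (Fq : Type*) [Field Fq] [Fintype Fq] (x : Polynomial Fq) : ℝ :=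
  if x = 0 then 0 else (Fintype.card Fq : ℝ) ^ x.natDegree

/-- The standard additive character `ψ` of `K_∞`:
`ψ(α) = e(Tr_{F_q/F_p}(a₋₁)/p)` where `a₋₁` is the coefficient of `t⁻¹` (i.e. of `X¹`). -/
def psiChar (Fq : Type*) [Field Fq] [Fintype Fq] (α : Kinf Fq) : ℂ :=
  haveI : CharP Fq (ringChar Fq) := ringChar.charP Fq
  letI : Algebra (ZMod (ringChar Fq)) Fq := ZMod.algebra _ _
  Complex.exp (2 * Real.pi * Complex.I *
    ((Algebra.trace (ZMod (ringChar Fq)) Fq (α.coeff (1 : ℤ))).val : ℂ) / (ringChar Fq : ℂ))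

namespace FareyDissectionAux

set_option linter.unusedSectionVars false

variable {Fq : Type*} [Field Fq]

lemma tElem_eq : tElem Fq = HahnSeries.single (-1 : ℤ) (1 : Fq) := by
  rw [tElem]
  apply inv_eq_of_mul_eq_one_right
  rw [HahnSeries.single_mul_single]
  norm_num

lemma tElem_pow (n : ℕ) : (tElem Fq) ^ n = HahnSeries.single (-(n : ℤ)) (1 : Fq) := by
  induction n with
  | zero =>
    rw [pow_zero]
    norm_num
  | succ n ih =>
    rw [pow_succ, ih, tElem_eq, HahnSeries.single_mul_single]
    push_cast; ring_nf

lemma iota_monomial (n : ℕ) (c : Fq) :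
    iota Fq (Polynomial.monomial n c) = HahnSeries.single (-(n : ℤ)) c := by
  rw [iota, Polynomial.coe_eval₂RingHom, Polynomial.eval₂_monomial, tElem_pow]
  rw [HahnSeries.C_apply, HahnSeries.single_mul_single]
  simp

lemma iota_coeff_neg (p : Polynomial Fq) (n : ℕ) :
    (iota Fq p).coeff (-(n : ℤ)) = p.coeff n := by
  induction p using Polynomial.induction_on' with
  | add f g hf hg => simp [map_add, HahnSeries.coeff_add, hf, hg]
  | monomial m c =>
    rw [iota_monomial, Polynomial.coeff_monomial]
    by_cases h : n = m
    · subst h; simp [HahnSeries.coeff_single_same]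
    · rw [if_neg (fun hh => h hh.symm), HahnSeries.coeff_single_of_ne (by omega)]

lemma iota_coeff_pos (p : Polynomial Fq) (j : ℤ) (hj : 0 < j) :
    (iota Fq p).coeff j = 0 := by
  induction p using Polynomial.induction_on' with
  | add f g hf hg => simp [map_add, HahnSeries.coeff_add, hf, hg]
  | monomial m c =>
    rw [iota_monomial, HahnSeries.coeff_single_of_ne]
    omega

variable [Fintype Fq]

lemma qR_pos : (0:ℝ) < (Fintype.card Fq : ℝ) := by
  have := Fintype.card_pos (α := Fq); positivity

lemma qR_one_lt : (1:ℝ) < (Fintype.card Fq : ℝ) := by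
  exact_mod_cast Fintype.one_lt_card

lemma iota_coeff_zero_of_lt (p : Polynomial Fq) (j : ℤ) (hj : j < -(p.natDegree : ℤ)) :
    (iota Fq p).coeff j = 0 := by
  rcases le_or_gt j 0 with h | h
  · have hj' : j = -(((-j).toNat : ℕ) : ℤ) := by omega
    rw [hj', iota_coeff_neg]
    exact Polynomial.coeff_eq_zero_of_natDegree_lt (by omega)
  · exact iota_coeff_pos p j h

lemma iota_ne_zero {p : Polynomial Fq} (hp : p ≠ 0) : iota Fq p ≠ 0 := by
  intro h
  have := iota_coeff_neg p p.natDegree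
  rw [h] at this
  simp only [HahnSeries.coeff_zero] at this
  exact (Polynomial.leadingCoeff_ne_zero.mpr hp) this.symm

lemma order_iota {p : Polynomial Fq} (hp : p ≠ 0) :
    (iota Fq p).order = -(p.natDegree : ℤ) := by
  apply le_antisymm
  · apply HahnSeries.order_le_of_coeff_ne_zero
    rw [iota_coeff_neg]
    exact Polynomial.leadingCoeff_ne_zero.mpr hp
  · by_contra hlt
    push_neg at hlt
    exact (mt HahnSeries.coeff_order_eq_zero.mp (iota_ne_zero hp))
      (iota_coeff_zero_of_lt p _ hlt)

lemma absv_iota (p : Polynomial Fq) : absv Fq (iota Fq p) = polyAbs Fq p := by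
  by_cases hp : p = 0
  · simp [hp, absv, polyAbs]
  · rw [absv, polyAbs, if_neg (iota_ne_zero hp), if_neg hp, order_iota hp, neg_neg,
      zpow_natCast]

lemma absv_nonneg (x : Kinf Fq) : 0 ≤ absv Fq x := by
  rw [absv]; split
  · exact le_refl _
  · positivity

lemma absv_mul (x y : Kinf Fq) : absv Fq (x * y) = absv Fq x * absv Fq y := by
  by_cases hx : x = 0
  · simp [hx, absv]
  by_cases hy : y = 0
  · simp [hy, absv]
  rw [absv, absv, absv, if_neg hx, if_neg hy, if_neg (mul_ne_zero hx hy),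
    HahnSeries.order_mul hx hy, neg_add, zpow_add₀ (ne_of_gt (qR_pos (Fq := Fq)))]

lemma absv_lt_zpow_iff (x : Kinf Fq) (n : ℤ) :
    absv Fq x < (Fintype.card Fq : ℝ) ^ n ↔ ∀ j ≤ -n, x.coeff j = 0 := by
  by_cases hx : x = 0
  · simp [hx, absv, zpow_pos (qR_pos (Fq := Fq)) n]
  rw [absv, if_neg hx]
  rw [zpow_lt_zpow_iff_right₀ (qR_one_lt (Fq := Fq))]
  constructor
  · intro h j hj
    exact HahnSeries.coeff_eq_zero_of_lt_order (by omega)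
  · intro h
    by_contra hle
    push_neg at hle
    exact (mt HahnSeries.coeff_order_eq_zero.mp hx) (h _ (by omega))

lemma absv_sub_lt {x y : Kinf Fq} {n : ℤ}
    (hx : absv Fq x < (Fintype.card Fq : ℝ) ^ n) (hy : absv Fq y < (Fintype.card Fq : ℝ) ^ n) :
    absv Fq (x - y) < (Fintype.card Fq : ℝ) ^ n := by
  rw [absv_lt_zpow_iff] at *
  intro j hj
  rw [HahnSeries.coeff_sub, hx j hj, hy j hj, sub_zero]

lemma polyAbs_mul (x y : Polynomial Fq) :
    polyAbs Fq (x * y) = polyAbs Fq x * polyAbs Fq y := by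
  by_cases hx : x = 0
  · simp [hx, polyAbs]
  by_cases hy : y = 0
  · simp [hy, polyAbs]
  rw [polyAbs, polyAbs, polyAbs, if_neg hx, if_neg hy, if_neg (mul_ne_zero hx hy),
    Polynomial.natDegree_mul hx hy, pow_add]

lemma one_le_polyAbs {p : Polynomial Fq} (hp : p ≠ 0) : 1 ≤ polyAbs Fq p := by
  rw [polyAbs, if_neg hp]
  exact one_le_pow₀ (le_of_lt (qR_one_lt (Fq := Fq)))

lemma polyAbs_C_inv_leading {p : Polynomial Fq} (hp : p ≠ 0) :
    polyAbs Fq (Polynomial.C p.leadingCoeff⁻¹) = 1 := by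
  rw [polyAbs, if_neg, Polynomial.natDegree_C, pow_zero]
  simp [Polynomial.leadingCoeff_ne_zero.mpr hp]

lemma iota_C (c : Fq) : iota Fq (Polynomial.C c) = HahnSeries.C c :=
  Polynomial.eval₂_C _ _

lemma exists_kernel (α : Kinf Fq) (Q : ℕ) :
    ∃ r : Polynomial Fq, r ≠ 0 ∧ r.natDegree ≤ Q ∧
      ∀ j : ℤ, 1 ≤ j → j ≤ (Q : ℤ) → (iota Fq r * α).coeff j = 0 := by
  let φ : Polynomial.degreeLT Fq (Q+1) →ₗ[Fq] (Fin Q → Fq) :=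
  { toFun := fun p => fun j => (iota Fq p.1 * α).coeff ((j.1 : ℤ) + 1)
    map_add' := by
      intro p q; funext j
      simp [map_add, add_mul, HahnSeries.coeff_add]
    map_smul' := by
      intro c p; funext j
      simp only [RingHom.id_apply, Pi.smul_apply, smul_eq_mul]
      have h1 : ((c • p : Polynomial.degreeLT Fq (Q+1)) : Polynomial Fq)
          = Polynomial.C c * p.1 := by
        rw [SetLike.val_smul, Polynomial.smul_eq_C_mul]
      rw [h1, map_mul, iota_C, mul_assoc, HahnSeries.C_apply,
        HahnSeries.coeff_single_zero_mul] }
  have hni : ¬ Function.Injective φ := by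
    intro hinj
    have h1 := LinearMap.finrank_le_finrank_of_injective hinj
    rw [(Polynomial.degreeLTEquiv Fq (Q+1)).finrank_eq] at h1
    simp [Module.finrank_pi] at h1
  rw [Function.not_injective_iff] at hni
  obtain ⟨p, p', hpp', hne⟩ := hni
  refine ⟨p.1 - p'.1, sub_ne_zero.mpr (fun h => hne (Subtype.ext h)), ?_, ?_⟩
  · have hmem : p.1 - p'.1 ∈ Polynomial.degreeLT Fq (Q+1) := by
      exact Submodule.sub_mem _ p.2 p'.2
    rw [Polynomial.mem_degreeLT] at hmem
    have := (Polynomial.natDegree_lt_iff_degree_lt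
      (sub_ne_zero.mpr (fun h => hne (Subtype.ext h)))).mpr hmem
    omega
  · intro j hj1 hjQ
    have hj' : (j - 1).toNat < Q := by omega
    have hc : (iota Fq p.1 * α).coeff ((((j-1).toNat : ℕ) : ℤ) + 1)
        = (iota Fq p'.1 * α).coeff ((((j-1).toNat : ℕ) : ℤ) + 1) := congrFun hpp' ⟨(j-1).toNat, hj'⟩
    have hcast : ((((j-1).toNat : ℕ) : ℤ) + 1) = j := by omega
    rw [hcast] at hc
    rw [map_sub, sub_mul, HahnSeries.coeff_sub, hc, sub_self]

lemma polyAbs_nonneg (p : Polynomial Fq) : 0 ≤ polyAbs Fq p := by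
  rw [polyAbs]; split
  · exact le_refl _
  · positivity

lemma polyAbs_one : polyAbs Fq (1 : Polynomial Fq) = 1 := by
  rw [polyAbs, if_neg one_ne_zero, Polynomial.natDegree_one, pow_zero]

lemma dirichlet (Q : ℕ) (α : Kinf Fq) (hα : absv Fq α < 1) :
    ∃ r a : Polynomial Fq, (r.Monic ∧ polyAbs Fq r ≤ (Fintype.card Fq : ℝ) ^ Q ∧
      polyAbs Fq a < polyAbs Fq r ∧ IsCoprime a r) ∧
      absv Fq (iota Fq r * α - iota Fq a) < (Fintype.card Fq : ℝ) ^ (-(Q : ℤ)) := by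
  have hq1 : (1:ℝ) < (Fintype.card Fq : ℝ) := qR_one_lt
  have hq0 : (0:ℝ) < (Fintype.card Fq : ℝ) := qR_pos
  by_cases hα0 : α = 0
  · refine ⟨1, 0, ⟨Polynomial.monic_one, ?_, ?_, isCoprime_zero_left.mpr isUnit_one⟩, ?_⟩
    · rw [polyAbs_one]; exact one_le_pow₀ (le_of_lt hq1)
    · rw [polyAbs_one, polyAbs, if_pos rfl]; norm_num
    · rw [hα0, mul_zero, map_zero, sub_zero, absv, if_pos rfl]
      exact zpow_pos hq0 _
  obtain ⟨r, hr0, hrdeg, hker⟩ := exists_kernel α Q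
  set β := iota Fq r * α with hβdef
  have hβ0 : β ≠ 0 := mul_ne_zero (iota_ne_zero hr0) hα0
  set N := (-β.order).toNat + 1 with hN
  set a : Polynomial Fq :=
    ∑ i ∈ Finset.range N, Polynomial.C (β.coeff (-(i : ℤ))) * Polynomial.X ^ i with ha
  have ha_coeff : ∀ n : ℕ, a.coeff n = β.coeff (-(n : ℤ)) := by
    intro n
    rw [ha, Polynomial.finset_sum_coeff]
    simp_rw [Polynomial.coeff_C_mul, Polynomial.coeff_X_pow, mul_ite, mul_one, mul_zero]
    rw [Finset.sum_ite_eq (Finset.range N) n (fun i => β.coeff (-(i : ℤ)))]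
    by_cases hn : n ∈ Finset.range N
    · rw [if_pos hn]
    · rw [if_neg hn]
      refine (HahnSeries.coeff_eq_zero_of_lt_order ?_).symm
      have h1 : -β.order ≤ ((-β.order).toNat : ℤ) := Int.self_le_toNat _
      have h2 : N ≤ n := by simpa [Finset.mem_range, not_lt] using hn
      omega
  have hdiff : ∀ j : ℤ, j ≤ (Q : ℤ) → (β - iota Fq a).coeff j = 0 := by
    intro j hj
    rw [HahnSeries.coeff_sub]
    rcases le_or_gt j 0 with h0 | h0
    · have hj' : j = -(((-j).toNat : ℕ) : ℤ) := by omega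
      rw [hj', iota_coeff_neg, ha_coeff, sub_self]
    · rw [hker j (by omega) hj, iota_coeff_pos a j h0, sub_zero]
  have hlt : absv Fq (β - iota Fq a) < (Fintype.card Fq : ℝ) ^ (-(Q : ℤ)) := by
    rw [absv_lt_zpow_iff]
    simpa using hdiff
  -- degree bound on a
  set d := r.natDegree with hd
  have hβlt : absv Fq β < (Fintype.card Fq : ℝ) ^ ((d : ℤ)) := by
    rw [hβdef, absv_mul, absv_iota, polyAbs, if_neg hr0, zpow_natCast]
    exact mul_lt_of_lt_one_right (pow_pos hq0 d) hα
  have hγlt : absv Fq (β - iota Fq a) < (Fintype.card Fq : ℝ) ^ ((d : ℤ)) :=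
    lt_of_lt_of_le hlt (zpow_le_zpow_right₀ (le_of_lt hq1) (by omega))
  have haabs : polyAbs Fq a < polyAbs Fq r := by
    have h3 := absv_sub_lt hβlt hγlt
    rw [sub_sub_cancel, absv_iota] at h3
    have hpr : polyAbs Fq r = (Fintype.card Fq : ℝ) ^ ((d : ℤ)) := by
      rw [polyAbs, if_neg hr0, zpow_natCast]
    rw [hpr]
    exact h3
  have hrabs : polyAbs Fq r ≤ (Fintype.card Fq : ℝ) ^ Q := by
    rw [polyAbs, if_neg hr0]
    exact pow_le_pow_right₀ (le_of_lt hq1) hrdeg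
  -- reduce to coprime
  set g := gcd a r with hg
  have hg0 : g ≠ 0 := fun h => hr0 ((gcd_eq_zero_iff a r).mp h).2
  set a₁ := a / g with ha₁
  set r₁ := r / g with hr₁
  have hae : a = g * a₁ := (EuclideanDomain.mul_div_cancel' hg0 (gcd_dvd_left a r)).symm
  have hre : r = g * r₁ := (EuclideanDomain.mul_div_cancel' hg0 (gcd_dvd_right a r)).symm
  have hr₁0 : r₁ ≠ 0 := by intro h; apply hr0; rw [hre, h, mul_zero]
  have hcop : IsCoprime a₁ r₁ := isCoprime_div_gcd_div_gcd hr0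
  have hgpos : 0 < polyAbs Fq g := lt_of_lt_of_le one_pos (one_le_polyAbs hg0)
  have ha₁r₁ : polyAbs Fq a₁ < polyAbs Fq r₁ := by
    have := haabs
    rw [hae, hre, polyAbs_mul, polyAbs_mul] at this
    exact (mul_lt_mul_iff_right₀ hgpos).mp this
  have hr₁r : polyAbs Fq r₁ ≤ polyAbs Fq r := by
    calc polyAbs Fq r₁ = 1 * polyAbs Fq r₁ := (one_mul _).symm
      _ ≤ polyAbs Fq g * polyAbs Fq r₁ :=
          mul_le_mul_of_nonneg_right (one_le_polyAbs hg0) (polyAbs_nonneg _)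
      _ = polyAbs Fq r := by rw [hre, polyAbs_mul]
  have habs₁ : absv Fq (iota Fq r₁ * α - iota Fq a₁) < (Fintype.card Fq : ℝ) ^ (-(Q : ℤ)) := by
    have hfac : β - iota Fq a = iota Fq g * (iota Fq r₁ * α - iota Fq a₁) := by
      rw [hβdef, hre, hae, map_mul, map_mul]; ring
    have := hlt
    rw [hfac, absv_mul, absv_iota] at this
    calc absv Fq (iota Fq r₁ * α - iota Fq a₁)
        ≤ polyAbs Fq g * absv Fq (iota Fq r₁ * α - iota Fq a₁) :=
          le_mul_of_one_le_left (absv_nonneg _) (one_le_polyAbs hg0)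
      _ < _ := this
  -- scale to monic
  set c := r₁.leadingCoeff with hc
  have hc0 : c ≠ 0 := Polynomial.leadingCoeff_ne_zero.mpr hr₁0
  set u := Polynomial.C c⁻¹ with hu
  have huu : IsUnit u := Polynomial.isUnit_C.mpr (isUnit_iff_ne_zero.mpr (inv_ne_zero hc0))
  have hu1 : polyAbs Fq u = 1 := polyAbs_C_inv_leading hr₁0
  refine ⟨r₁ * u, a₁ * u, ⟨Polynomial.monic_mul_leadingCoeff_inv hr₁0, ?_, ?_, ?_⟩, ?_⟩
  · rw [polyAbs_mul, hu1, mul_one]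
    exact le_trans hr₁r hrabs
  · rw [polyAbs_mul, polyAbs_mul, hu1, mul_one, mul_one]
    exact ha₁r₁
  · exact (isCoprime_mul_unit_right huu a₁ r₁).mpr hcop
  · have hfac : iota Fq (r₁ * u) * α - iota Fq (a₁ * u)
        = iota Fq u * (iota Fq r₁ * α - iota Fq a₁) := by
      rw [map_mul, map_mul]; ring
    rw [hfac, absv_mul, absv_iota, hu1, one_mul]
    exact habs₁

end FareyDissectionAux

open FareyDissectionAux in
/-- Farey dissection over `F_q((1/t))`: for every integer `Q ≥ 1`, the unit
interval `T = {α : |α| < 1}` is the disjoint union, over monic `r` with `|r| ≤ q^Q` and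
`a` with `|a| < |r|`, `gcd(a,r) = 1`, of the sets `{α ∈ T : |rα - a| < q^{-Q}}`. -/
theorem farey_dissection (Fq : Type*) [Field Fq] [Fintype Fq] (Q : ℕ) (hQ : 1 ≤ Q) :
    ({α : Kinf Fq | absv Fq α < 1} =
      ⋃ (r : Polynomial Fq) (a : Polynomial Fq)
        (_ : r.Monic ∧ polyAbs Fq r ≤ (Fintype.card Fq : ℝ) ^ Q ∧
          polyAbs Fq a < polyAbs Fq r ∧ IsCoprime a r),
        {α : Kinf Fq | absv Fq α < 1 ∧
          absv Fq (iota Fq r * α - iota Fq a) < (Fintype.card Fq : ℝ) ^ (-(Q : ℤ))}) ∧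
    ∀ r a r' a' : Polynomial Fq,
      (r.Monic ∧ polyAbs Fq r ≤ (Fintype.card Fq : ℝ) ^ Q ∧
        polyAbs Fq a < polyAbs Fq r ∧ IsCoprime a r) →
      (r'.Monic ∧ polyAbs Fq r' ≤ (Fintype.card Fq : ℝ) ^ Q ∧
        polyAbs Fq a' < polyAbs Fq r' ∧ IsCoprime a' r') →
      (r, a) ≠ (r', a') →
      Disjoint
        {α : Kinf Fq | absv Fq α < 1 ∧
          absv Fq (iota Fq r * α - iota Fq a) < (Fintype.card Fq : ℝ) ^ (-(Q : ℤ))}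
        {α : Kinf Fq | absv Fq α < 1 ∧
          absv Fq (iota Fq r' * α - iota Fq a') < (Fintype.card Fq : ℝ) ^ (-(Q : ℤ))} := by
  have hq1 : (1:ℝ) < (Fintype.card Fq : ℝ) := qR_one_lt
  have hq0 : (0:ℝ) < (Fintype.card Fq : ℝ) := qR_pos
  constructor
  · ext α
    simp only [Set.mem_setOf_eq, Set.mem_iUnion]
    constructor
    · intro hα
      obtain ⟨r, a, hcond, habs⟩ := dirichlet Q α hα
      exact ⟨r, a, hcond, hα, habs⟩
    · rintro ⟨r, a, _, hα, _⟩
      exact hα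
  · intro r a r' a' h h' hne
    rw [Set.disjoint_left]
    intro α hmem hmem'
    apply hne
    obtain ⟨hα, hu⟩ := hmem
    obtain ⟨-, hv⟩ := hmem'
    have key : iota Fq (r * a' - r' * a)
        = iota Fq r' * (iota Fq r * α - iota Fq a)
          - iota Fq r * (iota Fq r' * α - iota Fq a') := by
      rw [map_sub, map_mul, map_mul]; ring
    have bound : ∀ (s : Polynomial Fq) (x : Kinf Fq),
        polyAbs Fq s ≤ (Fintype.card Fq : ℝ) ^ Q →
        absv Fq x < (Fintype.card Fq : ℝ) ^ (-(Q : ℤ)) →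
        absv Fq (iota Fq s * x) < (Fintype.card Fq : ℝ) ^ ((0 : ℤ)) := by
      intro s x hs hx
      rw [absv_mul, absv_iota]
      calc polyAbs Fq s * absv Fq x
          ≤ (Fintype.card Fq : ℝ) ^ Q * absv Fq x :=
            mul_le_mul_of_nonneg_right hs (absv_nonneg _)
        _ < (Fintype.card Fq : ℝ) ^ Q * (Fintype.card Fq : ℝ) ^ (-(Q : ℤ)) :=
            (mul_lt_mul_iff_right₀ (pow_pos hq0 Q)).2 hx
        _ = (Fintype.card Fq : ℝ) ^ ((0 : ℤ)) := by
            rw [← zpow_natCast (Fintype.card Fq : ℝ) Q, ← zpow_add₀ (ne_of_gt hq0)]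
            norm_num
    have hsub := absv_sub_lt (bound r' _ h'.2.1 hu) (bound r _ h.2.1 hv)
    rw [← key, absv_iota, zpow_zero] at hsub
    have hz : r * a' - r' * a = 0 := by
      by_contra hne0
      exact absurd hsub (not_lt.mpr (one_le_polyAbs hne0))
    have heq : r * a' = r' * a := sub_eq_zero.mp hz
    have hd1 : r ∣ r' := by
      refine (h.2.2.2.symm).dvd_of_dvd_mul_right ?_
      rw [← heq]
      exact Dvd.intro a' rfl
    have hd2 : r' ∣ r := by
      refine (h'.2.2.2.symm).dvd_of_dvd_mul_right ?_
      rw [heq]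
      exact Dvd.intro a rfl
    have hrr' : r = r' :=
      Polynomial.eq_of_monic_of_associated h.1 h'.1 (associated_of_dvd_dvd hd1 hd2)
    have haa' : a = a' := by
      apply mul_left_cancel₀ (h.1.ne_zero)
      rw [← hrr'] at heq
      exact heq.symm
    rw [hrr', haa']
end
end

section
/- Polynomial level-set estimate: suppose f ∈ K[x] has leading term a x^d with a ≠ 0 and d ≥ 1, where K = F_q(t). For B, λ ∈ R and uniformly over places v of K, the number of x ∈ F_q[t] with |x| ≤ q^B and |f(x)|_v ≤ q^λ is O_K(d · (1 + q^{B·[v ≠ ∞]} · (q^λ/|a|_v)^{1/d})). -/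
open scoped Classical

noncomputable section

/-- The embedding of `F_q[t]` into `K = F_q(t)`. -/
def kmap (Fq : Type*) [Field Fq] [Fintype Fq] : Polynomial Fq →+* RatFunc Fq :=
  algebraMap (Polynomial Fq) (RatFunc Fq)

theorem nonarch_sum {K : Type*} [Field K] (v : AbsoluteValue K ℝ)
    (hna : ∀ x y, v (x + y) ≤ max (v x) (v y)) {ι : Type*} (g : ι → K) (s : Finset ι)
    (hs : s.Nonempty) : ∃ i ∈ s, v (∑ j ∈ s, g j) ≤ v (g i) := by
  induction s using Finset.cons_induction with
  | empty => exact absurd hs (by simp)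
  | cons a s ha ih =>
    rcases s.eq_empty_or_nonempty with h | h
    · subst h
      exact ⟨a, by simp⟩
    · obtain ⟨i, hi, hile⟩ := ih h
      rw [Finset.sum_cons]
      rcases le_max_iff.mp (hna (g a) (∑ j ∈ s, g j)) with h1 | h1
      · exact ⟨a, Finset.mem_cons_self _ _, h1⟩
      · exact ⟨i, Finset.mem_cons_of_mem hi, h1.trans hile⟩

/-- Lagrange interpolation formula for the leading coefficient. -/

theorem lagrange_lc {F : Type*} [Field F] (f : Polynomial F) (s : Finset F)
    (hs : s.card = f.natDegree + 1) :
    f.leadingCoeff = ∑ x ∈ s, f.eval x * (∏ y ∈ s.erase x, (x - y))⁻¹ := by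
  have hinj : Set.InjOn (id : F → F) s := Function.injective_id.injOn
  have hdeg : f.degree < s.card := by
    refine lt_of_le_of_lt f.degree_le_natDegree ?_
    rw [hs]
    exact_mod_cast lt_add_one f.natDegree
  have h1 := Lagrange.eq_interpolate (f := f) hinj hdeg
  have h2 := congrArg (fun p => Polynomial.coeff p f.natDegree) h1
  simp only [Lagrange.interpolate_apply, Polynomial.finset_sum_coeff,
    Polynomial.coeff_C_mul] at h2
  rw [Polynomial.coeff_natDegree] at h2
  rw [h2]
  refine Finset.sum_congr rfl fun x hx => ?_
  congr 1
  have hb : (Lagrange.basis s id x).natDegree = f.natDegree := by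
    rw [Lagrange.natDegree_basis hinj hx, hs]
    simp
  rw [← hb, Polynomial.coeff_natDegree]
  rw [Lagrange.basis]
  rw [Polynomial.leadingCoeff_prod]
  rw [← Finset.prod_inv_distrib]
  refine Finset.prod_congr rfl fun y hy => ?_
  have hxy : (id x : F) ≠ id y := by
    simp only [id]
    exact fun h => (Finset.mem_erase.mp hy).1 (by rw [h])
  rw [Lagrange.basisDivisor, Polynomial.leadingCoeff_mul, Polynomial.leadingCoeff_C,
    (Polynomial.monic_X_sub_C _).leadingCoeff, mul_one]
  rfl

theorem sep_lemma {K : Type*} [Field K] (v : AbsoluteValue K ℝ)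
    (hna : ∀ x y, v (x + y) ≤ max (v x) (v y)) (f : Polynomial K) (hf : f ≠ 0)
    (hd : 1 ≤ f.natDegree) (M r : ℝ) (hr : 0 < r) (hM : 0 < M)
    (hrd : M ≤ v f.leadingCoeff * r ^ f.natDegree) (T : Finset K)
    (hT1 : ∀ x ∈ T, v (f.eval x) ≤ M)
    (hT2 : ∀ x ∈ T, ∀ y ∈ T, x ≠ y → r < v (x - y)) : T.card ≤ f.natDegree := by
  by_contra hcon
  push_neg at hcon
  obtain ⟨s, hsT, hscard⟩ := Finset.exists_subset_card_eq hcon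
  have hva : 0 < v f.leadingCoeff := v.pos (Polynomial.leadingCoeff_ne_zero.mpr hf)
  have hlag := lagrange_lc f s hscard
  have hsne : s.Nonempty := Finset.card_pos.mp (by omega)
  obtain ⟨x, hx, hle⟩ := nonarch_sum v hna _ s hsne
  rw [← hlag] at hle
  -- bound the term at x
  have hP : r ^ f.natDegree < ∏ y ∈ s.erase x, v (x - y) := by
    have hcarderase : (s.erase x).card = f.natDegree := by
      rw [Finset.card_erase_of_mem hx, hscard]
      omega
    have hne : (s.erase x).Nonempty := Finset.card_pos.mp (by omega)
    calc r ^ f.natDegree = ∏ _y ∈ s.erase x, r := by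
          rw [Finset.prod_const, hcarderase]
      _ < ∏ y ∈ s.erase x, v (x - y) := by
          refine Finset.prod_lt_prod_of_nonempty (fun i _ => hr) (fun y hy => ?_) hne
          obtain ⟨hyx, hys⟩ := Finset.mem_erase.mp hy
          exact hT2 x (hsT hx) y (hsT hys) (Ne.symm hyx)
  have hPpos : 0 < ∏ y ∈ s.erase x, v (x - y) := lt_trans (pow_pos hr _) hP
  have hterm : v (f.eval x * (∏ y ∈ s.erase x, (x - y))⁻¹)
      = v (f.eval x) * (∏ y ∈ s.erase x, v (x - y))⁻¹ := by
    rw [v.map_mul, map_inv₀, map_prod]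
  have h1 : v f.leadingCoeff ≤ M * (∏ y ∈ s.erase x, v (x - y))⁻¹ := by
    refine hle.trans ?_
    rw [hterm]
    exact mul_le_mul_of_nonneg_right (hT1 x (hsT hx)) (by positivity)
  have h2 : M * (∏ y ∈ s.erase x, v (x - y))⁻¹ < M * (r ^ f.natDegree)⁻¹ := by
    apply mul_lt_mul_of_pos_left _ hM
    exact inv_strictAnti₀ (pow_pos hr _) hP
  have h3 : M * (r ^ f.natDegree)⁻¹ ≤ v f.leadingCoeff := by
    rw [← div_eq_mul_inv, div_le_iff₀ (pow_pos hr _)]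
    exact hrd
  linarith

/-- Covering lemma. -/

theorem cover_lemma {α : Type*} [DecidableEq α] (S : Finset α) (near : α → α → Prop)
    (hrefl : ∀ x, near x x) (hsymm : ∀ x y, near x y → near y x) (d : ℕ)
    (hd : ∀ T ⊆ S, (∀ x ∈ T, ∀ y ∈ T, x ≠ y → ¬ near x y) → T.card ≤ d) :
    ∃ T ⊆ S, T.card ≤ d ∧ ∀ x ∈ S, ∃ t ∈ T, near t x := by
  set P : Finset α → Prop := fun T => ∀ x ∈ T, ∀ y ∈ T, x ≠ y → ¬ near x y with hP
  have h0 : (∅ : Finset α) ∈ S.powerset.filter P := by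
    simp [P]
  obtain ⟨T, hTmem, hTmax⟩ := Finset.exists_max_image (S.powerset.filter P)
    Finset.card ⟨∅, h0⟩
  rw [Finset.mem_filter, Finset.mem_powerset] at hTmem
  obtain ⟨hTS, hTfar⟩ := hTmem
  refine ⟨T, hTS, hd T hTS hTfar, fun x hx => ?_⟩
  by_contra hno
  push_neg at hno
  have hxT : x ∉ T := fun h => hno x h (hrefl x)
  have hins : insert x T ∈ S.powerset.filter P := by
    rw [Finset.mem_filter, Finset.mem_powerset]
    constructor
    · exact Finset.insert_subset hx hTS
    · intro a ha b hb hab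
      rcases Finset.mem_insert.mp ha with ha' | ha'
      · rcases Finset.mem_insert.mp hb with hb' | hb'
        · exact absurd (ha'.trans hb'.symm) hab
        · subst ha'
          exact fun h => hno b hb' (hsymm _ _ h)
      · rcases Finset.mem_insert.mp hb with hb' | hb'
        · subst hb'
          exact fun h => hno a ha' h
        · exact hTfar a ha' b hb' hab
  have := hTmax _ hins
  rw [Finset.card_insert_of_notMem hxT] at this
  omega

section AuxFq
variable {Fq : Type*} [Field Fq] [Fintype Fq]

theorem card_le_pow_of_degree_lt (A : Finset (Polynomial Fq)) (m : ℕ)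
    (hA : ∀ p ∈ A, p.degree < (m : ℕ)) : (A.card : ℝ) ≤ (Fintype.card Fq : ℝ) ^ m := by
  have key : A.card ≤ Fintype.card (Fin m → Fq) := by
    refine Finset.card_le_card_of_injOn (fun p (i : Fin m) => p.coeff i)
      (fun p _ => Finset.mem_univ _) ?_
    intro p₁ hp₁ p₂ hp₂ h
    simp only [Finset.mem_coe] at hp₁ hp₂
    ext n
    by_cases hn : n < m
    · exact congrFun h ⟨n, hn⟩
    · rw [Polynomial.coeff_eq_zero_of_degree_lt, Polynomial.coeff_eq_zero_of_degree_lt]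
      · exact lt_of_lt_of_le (hA p₂ hp₂) (by exact_mod_cast Nat.le_of_not_lt hn)
      · exact lt_of_lt_of_le (hA p₁ hp₁) (by exact_mod_cast Nat.le_of_not_lt hn)
  calc (A.card : ℝ) ≤ (Fintype.card (Fin m → Fq) : ℝ) := by exact_mod_cast key
    _ = (Fintype.card Fq : ℝ) ^ m := by
        rw [Fintype.card_fun]
        push_cast
        simp

theorem kmap_injective : Function.Injective (kmap Fq) :=
  IsFractionRing.injective (Polynomial Fq) (RatFunc Fq)

theorem finite_degreeLT (m : ℕ) :
    {p : Polynomial Fq | p.degree < ((m : ℕ) : WithBot ℕ)}.Finite := by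
  have h1 : Finite (Polynomial.degreeLT Fq m) :=
    Finite.of_equiv _ (Polynomial.degreeLTEquiv Fq m).toEquiv.symm
  have h2 : {p : Polynomial Fq | p.degree < ((m : ℕ) : WithBot ℕ)}
      = ↑(Polynomial.degreeLT Fq m) := by
    ext p
    simp [Polynomial.mem_degreeLT]
  rw [h2]
  exact Set.toFinite _

theorem ball_inf (v : AbsoluteValue (RatFunc Fq) ℝ)
    (hv : ∀ p : Polynomial Fq, p ≠ 0 → v (kmap Fq p) = (Fintype.card Fq : ℝ) ^ p.natDegree)
    (F : Finset (Polynomial Fq)) (t : Polynomial Fq) (r : ℝ) (hr : 0 < r) :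
    ((F.filter (fun x => v (kmap Fq t - kmap Fq x) ≤ r)).card : ℝ)
      ≤ 1 + (Fintype.card Fq : ℝ) * r := by
  have hq1 : (1 : ℝ) < (Fintype.card Fq : ℝ) := by exact_mod_cast Fintype.one_lt_card
  have hq0 : (0 : ℝ) < (Fintype.card Fq : ℝ) := lt_trans one_pos hq1
  set A := F.filter (fun x => v (kmap Fq t - kmap Fq x) ≤ r) with hA
  set A' := A.image (fun x => t - x) with hA'
  have hcard : A.card = A'.card := by
    rw [hA', Finset.card_image_of_injective _ (fun a b h => by
      have : t - a = t - b := h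
      linear_combination (norm := ring_nf) -this)]
  have hmem : ∀ y ∈ A', v (kmap Fq y) ≤ r := by
    intro y hy
    obtain ⟨x, hx, rfl⟩ := Finset.mem_image.mp hy
    have := (Finset.mem_filter.mp hx).2
    rwa [← map_sub] at this
  rcases lt_or_ge r 1 with hr1 | hr1
  · have hsub : A' ⊆ {0} := by
      intro y hy
      rw [Finset.mem_singleton]
      by_contra hy0
      have h1 : (1 : ℝ) ≤ v (kmap Fq y) := by
        rw [hv y hy0]
        exact one_le_pow₀ hq1.le
      linarith [hmem y hy]
    have : A'.card ≤ 1 := le_trans (Finset.card_le_card hsub) (by simp)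
    have h2 : (0:ℝ) < (Fintype.card Fq : ℝ) * r := by positivity
    rw [hcard]
    calc (A'.card : ℝ) ≤ 1 := by exact_mod_cast this
      _ ≤ _ := by linarith
  · set m := ⌊Real.logb (Fintype.card Fq) r⌋₊ with hm
    have hdeg : ∀ y ∈ A', y.degree < ((m + 1 : ℕ) : WithBot ℕ) := by
      intro y hy
      by_cases hy0 : y = 0
      · subst hy0; simp [Polynomial.degree_zero]
      · rw [← Polynomial.natDegree_lt_iff_degree_lt hy0]
        have h1 : ((Fintype.card Fq : ℝ) ^ y.natDegree : ℝ) ≤ r := by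
          rw [← hv y hy0]; exact hmem y hy
        have h2 : ((Fintype.card Fq : ℝ)) ^ (y.natDegree : ℝ) ≤ r := by
          rwa [Real.rpow_natCast]
        have h3 : (y.natDegree : ℝ) ≤ Real.logb (Fintype.card Fq) r :=
          (Real.le_logb_iff_rpow_le hq1 hr).mpr h2
        have h4 : y.natDegree ≤ m := Nat.le_floor h3
        exact_mod_cast Nat.lt_succ_of_le h4
    have hcount := card_le_pow_of_degree_lt A' (m+1) hdeg
    have hqm : ((Fintype.card Fq : ℝ)) ^ m ≤ r := by
      have h5 : (m : ℝ) ≤ Real.logb (Fintype.card Fq) r :=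
        Nat.floor_le (Real.logb_nonneg hq1 hr1)
      calc ((Fintype.card Fq : ℝ)) ^ m = ((Fintype.card Fq : ℝ)) ^ (m : ℝ) := by
            rw [Real.rpow_natCast]
        _ ≤ ((Fintype.card Fq : ℝ)) ^ Real.logb (Fintype.card Fq) r :=
            Real.rpow_le_rpow_of_exponent_le hq1.le h5
        _ = r := Real.rpow_logb hq0 (ne_of_gt hq1) hr
    rw [hcard]
    calc (A'.card : ℝ) ≤ (Fintype.card Fq : ℝ) ^ (m+1) := hcount
      _ = (Fintype.card Fq : ℝ) * (Fintype.card Fq : ℝ) ^ m := by ring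
      _ ≤ (Fintype.card Fq : ℝ) * r := by
          exact mul_le_mul_of_nonneg_left hqm hq0.le
      _ ≤ _ := by linarith

theorem ball_fin (v : AbsoluteValue (RatFunc Fq) ℝ) (ϖ : Polynomial Fq) (hmon : ϖ.Monic)
    (hirr : Irreducible ϖ)
    (hv : ∀ p : Polynomial Fq, p ≠ 0 →
      v (kmap Fq p) = (Fintype.card Fq : ℝ) ^ (-((multiplicity ϖ p * ϖ.natDegree : ℕ) : ℤ)))
    (F : Finset (Polynomial Fq)) (n : ℕ) (hF : ∀ x ∈ F, x.degree < ((n + 1 : ℕ) : WithBot ℕ))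
    (t : Polynomial Fq) (ht : t.degree < ((n + 1 : ℕ) : WithBot ℕ)) (r : ℝ) (hr : 0 < r) :
    ((F.filter (fun x => v (kmap Fq t - kmap Fq x) ≤ r)).card : ℝ)
      ≤ 1 + (Fintype.card Fq : ℝ) ^ ((n + 1 : ℕ)) * r := by
  have hq1 : (1 : ℝ) < (Fintype.card Fq : ℝ) := by exact_mod_cast Fintype.one_lt_card
  have hq0 : (0 : ℝ) < (Fintype.card Fq : ℝ) := lt_trans one_pos hq1
  have hdϖ : 0 < ϖ.natDegree := hirr.natDegree_pos
  set q : ℝ := (Fintype.card Fq : ℝ) with hqdef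
  set A := F.filter (fun x => v (kmap Fq t - kmap Fq x) ≤ r) with hA
  have h_ex : ∃ k : ℕ, q ^ (-((k * ϖ.natDegree : ℕ) : ℤ)) ≤ r := by
    obtain ⟨k, hk⟩ := exists_pow_lt_of_lt_one hr (by
      rw [inv_lt_one_iff₀]; right; exact hq1 : (q⁻¹ : ℝ) < 1)
    refine ⟨k, le_trans ?_ hk.le⟩
    have h1 : q ^ (-((k * ϖ.natDegree : ℕ) : ℤ)) = (q ^ (k * ϖ.natDegree))⁻¹ := by
      rw [zpow_neg, zpow_natCast]
    rw [h1, inv_pow]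
    refine (inv_le_inv₀ (by positivity) (by positivity)).mpr ?_
    exact pow_le_pow_right₀ hq1.le (Nat.le_mul_of_pos_right k hdϖ)
  set k := Nat.find h_ex with hkdef
  have hk1 : q ^ (-((k * ϖ.natDegree : ℕ) : ℤ)) ≤ r := Nat.find_spec h_ex
  have hk2 : ∀ m : ℕ, q ^ (-((m * ϖ.natDegree : ℕ) : ℤ)) ≤ r → k ≤ m :=
    fun m hm => Nat.find_min' h_ex hm
  have hAsub : A ⊆ insert t (A.erase t) := by
    intro x hx
    by_cases hxt : x = t
    · subst hxt; exact Finset.mem_insert_self _ _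
    · exact Finset.mem_insert_of_mem (Finset.mem_erase.mpr ⟨hxt, hx⟩)
  have hcard1 : (A.card : ℝ) ≤ 1 + ((A.erase t).card : ℝ) := by
    have h := le_trans (Finset.card_le_card hAsub) (Finset.card_insert_le _ _)
    have h2 : (A.card : ℝ) ≤ ((A.erase t).card : ℝ) + 1 := by exact_mod_cast h
    linarith
  have key : ∀ x ∈ A.erase t, ϖ ^ k ∣ (t - x) ∧ t - x ≠ 0 ∧ (t - x).natDegree ≤ n := by
    intro x hx
    obtain ⟨hxt, hxA⟩ := Finset.mem_erase.mp hx
    obtain ⟨hxF, hxr⟩ := Finset.mem_filter.mp hxA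
    have hy0 : t - x ≠ 0 := sub_ne_zero.mpr (Ne.symm hxt)
    have hvy : v (kmap Fq (t - x)) ≤ r := by rwa [map_sub]
    rw [hv _ hy0] at hvy
    have hkm : k ≤ multiplicity ϖ (t - x) := hk2 _ hvy
    have hdvd : ϖ ^ k ∣ (t - x) := pow_dvd_of_le_multiplicity hkm
    have hdy : (t - x).natDegree ≤ n := by
      have hlt : (t - x).degree < ((n + 1 : ℕ) : WithBot ℕ) :=
        lt_of_le_of_lt (Polynomial.degree_sub_le t x) (max_lt ht (hF x hxF))
      have := (Polynomial.natDegree_lt_iff_degree_lt hy0).mpr hlt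
      omega
    exact ⟨hdvd, hy0, hdy⟩
  rcases (A.erase t).eq_empty_or_nonempty with he | ⟨x₀, hx₀⟩
  · rw [he] at hcard1
    simp only [Finset.card_empty, Nat.cast_zero, add_zero] at hcard1
    have : (0:ℝ) ≤ q ^ (n+1) * r := by positivity
    linarith
  · have hkn : k * ϖ.natDegree ≤ n := by
      obtain ⟨hdvd, hy0, hdy⟩ := key x₀ hx₀
      have := Polynomial.natDegree_le_of_dvd hdvd hy0
      rw [Polynomial.natDegree_pow] at this
      omega
    set m' := n + 1 - k * ϖ.natDegree with hm'
    set g : Polynomial Fq → Polynomial Fq := fun x => (t - x) /ₘ ϖ ^ k with hg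
    have hgy : ∀ x ∈ A.erase t, ϖ ^ k * g x = t - x := by
      intro x hx
      obtain ⟨hdvd, hy0, hdy⟩ := key x hx
      have h2 := Polynomial.modByMonic_add_div (t - x) (ϖ ^ k)
      rwa [(Polynomial.modByMonic_eq_zero_iff_dvd (hmon.pow k)).mpr hdvd, zero_add] at h2
    have hinj : Set.InjOn g (A.erase t) := by
      intro x₁ h₁ x₂ h₂ he2
      have e1 := hgy x₁ (by exact_mod_cast h₁)
      have e2 := hgy x₂ (by exact_mod_cast h₂)
      rw [he2, e2] at e1
      exact (sub_right_inj.mp e1.symm)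
    have hdegg : ∀ p ∈ (A.erase t).image g, p.degree < ((m' : ℕ) : WithBot ℕ) := by
      intro p hp
      obtain ⟨x, hx, rfl⟩ := Finset.mem_image.mp hp
      obtain ⟨hdvd, hy0, hdy⟩ := key x hx
      have he2 := hgy x hx
      have hg0 : g x ≠ 0 := by
        intro h
        rw [h, mul_zero] at he2
        exact hy0 he2.symm
      have hpow0 : (ϖ ^ k) ≠ 0 := (hmon.pow k).ne_zero
      have hnd : (t - x).natDegree = k * ϖ.natDegree + (g x).natDegree := by
        rw [← he2, Polynomial.natDegree_mul hpow0 hg0, Polynomial.natDegree_pow]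
      rw [← Polynomial.natDegree_lt_iff_degree_lt hg0]
      omega
    have hcard2 : ((A.erase t).card : ℝ) ≤ q ^ m' := by
      rw [← Finset.card_image_of_injOn hinj]
      exact card_le_pow_of_degree_lt _ _ hdegg
    have hqm : q ^ m' ≤ q ^ (n + 1) * r := by
      calc q ^ m' = q ^ ((m' : ℤ)) := (zpow_natCast q m').symm
        _ = q ^ (((n+1 : ℕ) : ℤ)) * q ^ (-((k * ϖ.natDegree : ℕ) : ℤ)) := by
            rw [← zpow_add₀ (ne_of_gt hq0)]
            congr 1
            push_cast [hm']
            omega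
        _ ≤ q ^ (((n+1 : ℕ) : ℤ)) * r := by
            refine mul_le_mul_of_nonneg_left hk1 ?_
            positivity
        _ = q ^ (n + 1) * r := by rw [zpow_natCast]
    linarith

theorem master (v : AbsoluteValue (RatFunc Fq) ℝ)
    (hna : ∀ x y, v (x + y) ≤ max (v x) (v y)) (f : Polynomial (RatFunc Fq)) (hf : f ≠ 0)
    (hd : 1 ≤ f.natDegree) (B lam : ℝ) (hB : 0 ≤ B) (r : ℝ)
    (hrdef : r = ((Fintype.card Fq : ℝ) ^ lam / v f.leadingCoeff) ^ ((1 : ℝ) / f.natDegree))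
    (Nb : ℝ) (hNb : 0 ≤ Nb)
    (hball : ∀ F : Finset (Polynomial Fq),
      (∀ x ∈ F, x.degree < ((⌊B⌋₊ + 1 : ℕ) : WithBot ℕ)) →
      ∀ t ∈ F, ((F.filter (fun x => v (kmap Fq t - kmap Fq x) ≤ r)).card : ℝ) ≤ Nb) :
    ((Set.ncard {x : Polynomial Fq | polyAbs Fq x ≤ (Fintype.card Fq : ℝ) ^ B ∧
        v (Polynomial.eval (kmap Fq x) f) ≤ (Fintype.card Fq : ℝ) ^ lam} : ℕ) : ℝ)
      ≤ f.natDegree * Nb := by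
  have hq1 : (1 : ℝ) < (Fintype.card Fq : ℝ) := by exact_mod_cast Fintype.one_lt_card
  have hq0 : (0 : ℝ) < (Fintype.card Fq : ℝ) := lt_trans one_pos hq1
  have hva : 0 < v f.leadingCoeff := v.pos (Polynomial.leadingCoeff_ne_zero.mpr hf)
  have hM : (0 : ℝ) < (Fintype.card Fq : ℝ) ^ lam := Real.rpow_pos_of_pos hq0 _
  have hr : 0 < r := by
    rw [hrdef]
    exact Real.rpow_pos_of_pos (div_pos hM hva) _
  have hrd : (Fintype.card Fq : ℝ) ^ lam = v f.leadingCoeff * r ^ f.natDegree := by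
    have h1 : r ^ f.natDegree = (Fintype.card Fq : ℝ) ^ lam / v f.leadingCoeff := by
      rw [hrdef, ← Real.rpow_natCast _ f.natDegree,
        ← Real.rpow_mul (le_of_lt (div_pos hM hva)), one_div,
        inv_mul_cancel₀ (by positivity : (f.natDegree : ℝ) ≠ 0),
        Real.rpow_one]
    rw [h1, mul_div_cancel₀ _ (ne_of_gt hva)]
  set S := {x : Polynomial Fq | polyAbs Fq x ≤ (Fintype.card Fq : ℝ) ^ B ∧
      v (Polynomial.eval (kmap Fq x) f) ≤ (Fintype.card Fq : ℝ) ^ lam} with hS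
  have hSdeg : ∀ x ∈ S, x.degree < ((⌊B⌋₊ + 1 : ℕ) : WithBot ℕ) := by
    intro x hx
    by_cases hx0 : x = 0
    · subst hx0
      rw [Polynomial.degree_zero]
      exact bot_lt_iff_ne_bot.mpr (by simp)
    · rw [← Polynomial.natDegree_lt_iff_degree_lt hx0]
      have h1 : (Fintype.card Fq : ℝ) ^ x.natDegree ≤ (Fintype.card Fq : ℝ) ^ B := by
        have := hx.1
        rwa [polyAbs, if_neg hx0] at this
      have h2 : ((Fintype.card Fq : ℝ)) ^ (x.natDegree : ℝ) ≤ (Fintype.card Fq : ℝ) ^ B := by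
        rwa [Real.rpow_natCast]
      have h3 : (x.natDegree : ℝ) ≤ B := (Real.rpow_le_rpow_left_iff hq1).mp h2
      have h4 : x.natDegree ≤ ⌊B⌋₊ := Nat.le_floor h3
      omega
  have hfin : S.Finite := Set.Finite.subset (finite_degreeLT (⌊B⌋₊ + 1)) hSdeg
  set F := hfin.toFinset with hF
  have hFdeg : ∀ x ∈ F, x.degree < ((⌊B⌋₊ + 1 : ℕ) : WithBot ℕ) := by
    intro x hx
    exact hSdeg x (hfin.mem_toFinset.mp hx)
  have hFS : ∀ x ∈ F, x ∈ S := fun x hx => hfin.mem_toFinset.mp hx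
  have hd_far : ∀ T ⊆ F, (∀ x ∈ T, ∀ y ∈ T, x ≠ y →
      ¬ (v (kmap Fq x - kmap Fq y) ≤ r)) → T.card ≤ f.natDegree := by
    intro T hTF hfar
    have h1 : ∀ z ∈ T.image (kmap Fq), v (f.eval z) ≤ (Fintype.card Fq : ℝ) ^ lam := by
      intro z hz
      obtain ⟨x, hx, rfl⟩ := Finset.mem_image.mp hz
      exact (hFS x (hTF hx)).2
    have h2 : ∀ z₁ ∈ T.image (kmap Fq), ∀ z₂ ∈ T.image (kmap Fq), z₁ ≠ z₂ →
        r < v (z₁ - z₂) := by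
      intro z₁ hz₁ z₂ hz₂ hne
      obtain ⟨x, hx, rfl⟩ := Finset.mem_image.mp hz₁
      obtain ⟨y, hy, rfl⟩ := Finset.mem_image.mp hz₂
      have hxy : x ≠ y := fun h => hne (by rw [h])
      exact not_le.mp (hfar x hx y hy hxy)
    have h3 := sep_lemma v hna f hf hd _ r hr hM (le_of_eq hrd) (T.image (kmap Fq)) h1 h2
    rwa [Finset.card_image_of_injective _ kmap_injective] at h3
  obtain ⟨T, hTF, hTcard, hcover⟩ := cover_lemma F
    (fun x y => v (kmap Fq x - kmap Fq y) ≤ r)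
    (fun x => by show v (kmap Fq x - kmap Fq x) ≤ r; rw [sub_self, map_zero]; exact le_of_lt hr) (fun x y h => by rwa [v.map_sub]) f.natDegree hd_far
  have hsub : F ⊆ T.biUnion (fun t => F.filter (fun x => v (kmap Fq t - kmap Fq x) ≤ r)) := by
    intro x hx
    obtain ⟨t, ht, hn⟩ := hcover x hx
    exact Finset.mem_biUnion.mpr ⟨t, ht, Finset.mem_filter.mpr ⟨hx, hn⟩⟩
  have h1 : (F.card : ℝ) ≤ ∑ t ∈ T,
      ((F.filter (fun x => v (kmap Fq t - kmap Fq x) ≤ r)).card : ℝ) := by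
    have := le_trans (Finset.card_le_card hsub) Finset.card_biUnion_le
    push_cast
    exact_mod_cast this
  have h2 : ∑ t ∈ T, ((F.filter (fun x => v (kmap Fq t - kmap Fq x) ≤ r)).card : ℝ)
      ≤ (T.card : ℝ) * Nb := by
    have := Finset.sum_le_card_nsmul T _ Nb (fun t ht => hball F hFdeg t (hTF ht))
    rwa [nsmul_eq_mul] at this
  have h3 : (T.card : ℝ) * Nb ≤ (f.natDegree : ℝ) * Nb := by
    refine mul_le_mul_of_nonneg_right ?_ hNb
    exact_mod_cast hTcard
  have h4 : (S.ncard : ℝ) = (F.card : ℝ) := by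
    rw [Set.ncard_eq_toFinset_card S hfin]
  rw [h4]
  linarith


end AuxFq

/-- polynomial level-set estimate: there exists a constant `C` depending only
on `K = F_q(t)` such that, uniformly over all places `v` of `K`, all `f ∈ K[x]` with leading
term `a·x^d`, `a ≠ 0`, `d ≥ 1`, and all `B, λ ∈ ℝ`,
`#{x ∈ F_q[t] : |x| ≤ q^B, |f(x)|_v ≤ q^λ} ≤ C·d·(1 + q^{B·[v ≠ ∞]}·(q^λ/|a|_v)^{1/d})`.
A place is a non-archimedean absolute value restricting on `F_q[t]` either to the infinite
one `|p| = q^{deg p}` or to a finite one `|p|_ϖ = q^{-ord_ϖ(p)·deg ϖ}`. -/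
theorem polynomial_level_set_estimate (Fq : Type*) [Field Fq] [Fintype Fq] :
    ∃ C : ℝ, 0 < C ∧
      ∀ v : AbsoluteValue (RatFunc Fq) ℝ,
        (∀ x y, v (x + y) ≤ max (v x) (v y)) →
        ∀ f : Polynomial (RatFunc Fq), f ≠ 0 → 1 ≤ f.natDegree →
        ∀ B lam : ℝ,
        -- the infinite place case
        ((∀ p : Polynomial Fq, p ≠ 0 →
            v (kmap Fq p) = (Fintype.card Fq : ℝ) ^ p.natDegree) →
          (Set.ncard {x : Polynomial Fq | polyAbs Fq x ≤ (Fintype.card Fq : ℝ) ^ B ∧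
              v (Polynomial.eval (kmap Fq x) f) ≤ (Fintype.card Fq : ℝ) ^ lam} : ℝ) ≤
            C * f.natDegree *
              (1 + ((Fintype.card Fq : ℝ) ^ lam / v f.leadingCoeff) ^ ((1 : ℝ) / f.natDegree))) ∧
        -- the finite place case
        ((∃ ϖ : Polynomial Fq, ϖ.Monic ∧ Irreducible ϖ ∧
            ∀ p : Polynomial Fq, p ≠ 0 →
              v (kmap Fq p) =
                (Fintype.card Fq : ℝ) ^ (-((multiplicity ϖ p * ϖ.natDegree : ℕ) : ℤ))) →
          (Set.ncard {x : Polynomial Fq | polyAbs Fq x ≤ (Fintype.card Fq : ℝ) ^ B ∧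
              v (Polynomial.eval (kmap Fq x) f) ≤ (Fintype.card Fq : ℝ) ^ lam} : ℝ) ≤
            C * f.natDegree *
              (1 + (Fintype.card Fq : ℝ) ^ B *
                ((Fintype.card Fq : ℝ) ^ lam / v f.leadingCoeff) ^ ((1 : ℝ) / f.natDegree))) := by
  have hq1 : (1 : ℝ) < (Fintype.card Fq : ℝ) := by exact_mod_cast Fintype.one_lt_card
  have hq0 : (0 : ℝ) < (Fintype.card Fq : ℝ) := lt_trans one_pos hq1
  refine ⟨(Fintype.card Fq : ℝ), hq0, ?_⟩
  intro v hna f hf hd B lam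
  set q : ℝ := (Fintype.card Fq : ℝ) with hqdef
  have hva : 0 < v f.leadingCoeff := v.pos (Polynomial.leadingCoeff_ne_zero.mpr hf)
  have hM : (0 : ℝ) < q ^ lam := Real.rpow_pos_of_pos hq0 _
  set r : ℝ := (q ^ lam / v f.leadingCoeff) ^ ((1 : ℝ) / f.natDegree) with hrdef
  have hr : 0 < r := Real.rpow_pos_of_pos (div_pos hM hva) _
  have hd1 : (1 : ℝ) ≤ (f.natDegree : ℝ) := by exact_mod_cast hd
  -- the small-B case
  have hsmall : B < 0 → (Set.ncard {x : Polynomial Fq | polyAbs Fq x ≤ q ^ B ∧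
      v (Polynomial.eval (kmap Fq x) f) ≤ q ^ lam} : ℝ) ≤ 1 := by
    intro hB
    have hsub : {x : Polynomial Fq | polyAbs Fq x ≤ q ^ B ∧
        v (Polynomial.eval (kmap Fq x) f) ≤ q ^ lam} ⊆ {0} := by
      intro x hx
      simp only [Set.mem_singleton_iff]
      by_contra hx0
      have h1 : (1 : ℝ) ≤ polyAbs Fq x := by
        rw [polyAbs, if_neg hx0]
        exact one_le_pow₀ hq1.le
      have h2 : q ^ B < 1 := Real.rpow_lt_one_of_one_lt_of_neg hq1 hB
      have := hx.1
      linarith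
    have := Set.ncard_le_ncard hsub (Set.finite_singleton 0)
    have h3 : ({(0 : Polynomial Fq)} : Set (Polynomial Fq)).ncard = 1 := Set.ncard_singleton 0
    rw [h3] at this
    exact_mod_cast this
  constructor
  · -- infinite place
    intro hv
    rcases lt_or_ge B 0 with hB | hB
    · refine (hsmall hB).trans ?_
      have h1 : (1 : ℝ) ≤ q * f.natDegree := by nlinarith
      have h2 : (0 : ℝ) ≤ r := hr.le
      nlinarith
    · have h := master v hna f hf hd B lam hB r hrdef (1 + q * r)
        (by positivity)
        (fun F hF t ht => ball_inf v hv F t r hr)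
      refine h.trans ?_
      have h2 : (0 : ℝ) ≤ r := hr.le
      nlinarith
  · -- finite place
    rintro ⟨ϖ, hmon, hirr, hv⟩
    rcases lt_or_ge B 0 with hB | hB
    · refine (hsmall hB).trans ?_
      have h1 : (1 : ℝ) ≤ q * f.natDegree := by nlinarith
      have h2 : (0 : ℝ) ≤ q ^ B * r := by positivity
      nlinarith
    · set n : ℕ := ⌊B⌋₊ with hn
      have h := master v hna f hf hd B lam hB r hrdef (1 + q ^ ((n + 1 : ℕ)) * r)
        (by positivity)
        (fun F hF t ht => ball_fin v ϖ hmon hirr hv F n hF t (hF t ht) r hr)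
      refine h.trans ?_
      have hqn : q ^ ((n + 1 : ℕ)) ≤ q * q ^ B := by
        have h1 : ((n : ℝ)) ≤ B := by
          exact_mod_cast Nat.floor_le hB
        calc q ^ ((n + 1 : ℕ)) = q ^ (((n + 1 : ℕ) : ℝ)) := by rw [Real.rpow_natCast]
          _ ≤ q ^ (B + 1) := by
              refine Real.rpow_le_rpow_of_exponent_le hq1.le ?_
              push_cast
              linarith
          _ = q ^ B * q := by rw [Real.rpow_add hq0, Real.rpow_one]
          _ = q * q ^ B := by ring
      have h2 : (0 : ℝ) ≤ r := hr.le
      have h3 : (0 : ℝ) ≤ q ^ B := (Real.rpow_pos_of_pos hq0 _).le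
      have h4 : q ^ ((n+1 : ℕ)) * r ≤ q * q ^ B * r := mul_le_mul_of_nonneg_right hqn h2
      nlinarith
end
end

section
/- Zero count modulo r for univariate polynomials: let f ∈ F_q[t][x] have leading term a x^d with a ≠ 0, d ≥ 1. Then there exists A_d > 0 such that for every monic r ∈ F_q[t], the number N(f;r) of solutions x ∈ F_q[t]/(r) to f(x) ≡ 0 (mod r) satisfies N(f;r) ≤ A_d^{ω(r)} |a|^{1/d} |r|^{1 − 1/d}, where ω(r) is the number of distinct monic irreducible factors of r. -/
open scoped Classical

set_option linter.unusedSectionVars false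
set_option maxHeartbeats 1000000

namespace UZD

open Polynomial

variable {Fq : Type*} [Field Fq] [Fintype Fq]

/-- solution set -/
def Sol (f : Polynomial (Polynomial Fq)) (r : Polynomial Fq) : Set (Polynomial Fq) :=
  {x | x.degree < r.degree ∧ r ∣ Polynomial.eval x f}

lemma degLT_eq (n : ℕ) :
    {x : Polynomial Fq | x.degree < (n : WithBot ℕ)} = ↑(degreeLT Fq n) := by
  ext x; simp [Polynomial.mem_degreeLT]

lemma finite_degLT (n : ℕ) : {x : Polynomial Fq | x.degree < (n : WithBot ℕ)}.Finite := by
  rw [degLT_eq]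
  have : Finite (degreeLT Fq n) := Finite.of_equiv _ ((degreeLTEquiv Fq n).toEquiv).symm
  exact Set.toFinite _

lemma ncard_degLT (n : ℕ) :
    {x : Polynomial Fq | x.degree < (n : WithBot ℕ)}.ncard = Fintype.card Fq ^ n := by
  rw [degLT_eq, ← Nat.card_coe_set_eq]
  have e : ((degreeLT Fq n : Set (Polynomial Fq))) ≃ (Fin n → Fq) :=
    (degreeLTEquiv Fq n).toEquiv
  rw [Nat.card_congr e]
  simp [Nat.card_eq_fintype_card]

lemma dvd_sub_iff_mod_eq {b x y : Polynomial Fq} (hb : b.Monic) :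
    b ∣ x - y ↔ x %ₘ b = y %ₘ b := by
  constructor
  · exact fun h => Polynomial.modByMonic_eq_of_dvd_sub hb h
  · intro h
    have hx : x - x %ₘ b = b * (x /ₘ b) := by
      rw [Polynomial.modByMonic_eq_sub_mul_div _ b]; ring
    have hy : y - y %ₘ b = b * (y /ₘ b) := by
      rw [Polynomial.modByMonic_eq_sub_mul_div _ b]; ring
    have : x - y = b * (x /ₘ b) - b * (y /ₘ b) := by
      rw [← hx, ← hy, h]; ring
    rw [this]
    exact Dvd.dvd.sub (Dvd.intro _ rfl) (Dvd.intro _ rfl)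

lemma sol_finite (f : Polynomial (Polynomial Fq)) {r : Polynomial Fq} (hr : r ≠ 0) :
    (Sol f r).Finite := by
  apply (finite_degLT r.natDegree).subset
  intro x hx
  simpa [Polynomial.degree_eq_natDegree hr] using hx.1

/-- Fibers of `x ↦ x %ₘ b` on the residues below `r` are small. -/
lemma ncard_fiber_le {b r : Polynomial Fq} (hb : b.Monic) (hr : r ≠ 0)
    (hdeg : b.natDegree ≤ r.natDegree) (c : Polynomial Fq) :
    {x : Polynomial Fq | x.degree < r.degree ∧ x %ₘ b = c}.ncard ≤
      Fintype.card Fq ^ (r.natDegree - b.natDegree) := by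
  rw [← ncard_degLT (Fq := Fq) (r.natDegree - b.natDegree)]
  apply Set.ncard_le_ncard_of_injOn (fun x => x /ₘ b) (ht := finite_degLT _)
  · intro x hx
    by_cases h0 : x /ₘ b = 0
    · simp only [Set.mem_setOf_eq, h0, Polynomial.degree_zero]
      exact WithBot.bot_lt_coe _
    · have hxne : x ≠ 0 := by
        intro h; rw [h] at h0; simp at h0
      have hbx : b.natDegree ≤ x.natDegree := by
        have hnlt : ¬ degree x < degree b := fun h =>
          h0 ((Polynomial.divByMonic_eq_zero_iff hb).2 h)
        exact Polynomial.natDegree_le_natDegree (not_lt.1 hnlt)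
      have hxr : x.natDegree < r.natDegree := by
        have := hx.1
        rwa [Polynomial.degree_eq_natDegree hxne, Polynomial.degree_eq_natDegree hr,
          Nat.cast_lt] at this
      have hnd : (x /ₘ b).natDegree = x.natDegree - b.natDegree :=
        Polynomial.natDegree_divByMonic x hb
      simp only [Set.mem_setOf_eq, Polynomial.degree_eq_natDegree h0, hnd, Nat.cast_lt]
      exact Nat.sub_lt_sub_right hbx hxr
  · intro x hx y hy hxy
    have ex : x = b * (x /ₘ b) + c := by
      conv_lhs => rw [← Polynomial.modByMonic_add_div x b]
      rw [hx.2]; ring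
    have ey : y = b * (y /ₘ b) + c := by
      conv_lhs => rw [← Polynomial.modByMonic_add_div y b]
      rw [hy.2]; ring
    simp only at hxy
    rw [ex, ey, hxy]


lemma dvd_eval_of_dvd_sub {f : Polynomial (Polynomial Fq)} {b x y : Polynomial Fq}
    (h : b ∣ x - y) : b ∣ Polynomial.eval x f - Polynomial.eval y f :=
  dvd_trans h (Polynomial.sub_dvd_eval_sub x y f)

lemma mem_sol_of_mod {f : Polynomial (Polynomial Fq)} {b x : Polynomial Fq}
    (hb : b.Monic) (hdvd : b ∣ Polynomial.eval x f) : (x %ₘ b) ∈ Sol f b := by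
  constructor
  · exact Polynomial.degree_modByMonic_lt x hb
  · have h1 : b ∣ x %ₘ b - x := by
      rw [Polynomial.modByMonic_eq_sub_mul_div _ b]
      exact ⟨-(x /ₘ b), by ring⟩
    have := dvd_eval_of_dvd_sub (f := f) h1
    have h2 := dvd_add this hdvd
    simpa using h2

lemma ncard_sol_mul (f : Polynomial (Polynomial Fq)) {r₁ r₂ : Polynomial Fq}
    (h₁ : r₁.Monic) (h₂ : r₂.Monic) (hco : IsCoprime r₁ r₂) :
    (Sol f (r₁ * r₂)).ncard = (Sol f r₁).ncard * (Sol f r₂).ncard := by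
  have h₁₂ : (r₁ * r₂).Monic := h₁.mul h₂
  have key : ∀ x ∈ Sol f (r₁ * r₂), r₁ ∣ Polynomial.eval x f ∧ r₂ ∣ Polynomial.eval x f := by
    intro x hx
    exact ⟨dvd_trans (Dvd.intro _ rfl) hx.2, dvd_trans (Dvd.intro_left _ rfl) hx.2⟩
  have hbij : Function.Bijective (fun x : Sol f (r₁ * r₂) =>
      ((⟨x.1 %ₘ r₁, mem_sol_of_mod h₁ (key x.1 x.2).1⟩ : Sol f r₁),
       (⟨x.1 %ₘ r₂, mem_sol_of_mod h₂ (key x.1 x.2).2⟩ : Sol f r₂))) := by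
    constructor
    · rintro ⟨x, hx⟩ ⟨y, hy⟩ hxy
      simp only [Prod.mk.injEq, Subtype.mk.injEq] at hxy
      have d1 : r₁ ∣ x - y := (dvd_sub_iff_mod_eq h₁).2 hxy.1
      have d2 : r₂ ∣ x - y := (dvd_sub_iff_mod_eq h₂).2 hxy.2
      have d12 : r₁ * r₂ ∣ x - y := hco.mul_dvd d1 d2
      have hsub : x - y = 0 := Polynomial.eq_zero_of_dvd_of_degree_lt d12 (by
        have hdx := hx.1; have hdy := hy.1
        calc (x - y).degree ≤ max x.degree y.degree := Polynomial.degree_sub_le x y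
        _ < (r₁ * r₂).degree := max_lt hdx hdy)
      exact Subtype.ext (sub_eq_zero.1 hsub)
    · rintro ⟨⟨x₁, hx₁⟩, ⟨x₂, hx₂⟩⟩
      have hco' := hco
      obtain ⟨u, v, huv⟩ := hco'
      set z : Polynomial Fq := x₂ * (u * r₁) + x₁ * (v * r₂) with hz
      set x : Polynomial Fq := z %ₘ (r₁ * r₂) with hxdef
      have hzx : r₁ * r₂ ∣ x - z := by
        rw [hxdef, Polynomial.modByMonic_eq_sub_mul_div _ (r₁ * r₂)]
        exact ⟨-(z /ₘ (r₁ * r₂)), by ring⟩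
      have hxx₁ : r₁ ∣ x - x₁ := by
        have e1 : r₁ ∣ z - x₁ := by
          have : z - x₁ = (x₂ * u - x₁ * u) * r₁ + x₁ * (u * r₁ + v * r₂ - 1) := by ring
          rw [this, huv]
          simpa using Dvd.intro _ rfl
        have e2 : r₁ ∣ x - z := dvd_trans (Dvd.intro _ rfl) hzx
        have := dvd_add e2 e1
        simpa using this
      have hxx₂ : r₂ ∣ x - x₂ := by
        have e1 : r₂ ∣ z - x₂ := by
          have : z - x₂ = (x₁ * v - x₂ * v) * r₂ + x₂ * (u * r₁ + v * r₂ - 1) := by ring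
          rw [this, huv]
          simpa using Dvd.intro _ rfl
        have e2 : r₂ ∣ x - z := dvd_trans (Dvd.intro_left _ rfl) hzx
        have := dvd_add e2 e1
        simpa using this
      have hxmem : x ∈ Sol f (r₁ * r₂) := by
        constructor
        · exact Polynomial.degree_modByMonic_lt z h₁₂
        · have f1 : r₁ ∣ Polynomial.eval x f := by
            have := dvd_eval_of_dvd_sub (f := f) hxx₁
            have h2 := dvd_add this hx₁.2
            simpa using h2
          have f2 : r₂ ∣ Polynomial.eval x f := by
            have := dvd_eval_of_dvd_sub (f := f) hxx₂
            have h2 := dvd_add this hx₂.2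
            simpa using h2
          exact hco.mul_dvd f1 f2
      refine ⟨⟨x, hxmem⟩, ?_⟩
      have m1 : x %ₘ r₁ = x₁ := by
        rw [(dvd_sub_iff_mod_eq h₁).1 hxx₁]
        exact (Polynomial.modByMonic_eq_self_iff h₁).2 hx₁.1
      have m2 : x %ₘ r₂ = x₂ := by
        rw [(dvd_sub_iff_mod_eq h₂).1 hxx₂]
        exact (Polynomial.modByMonic_eq_self_iff h₂).2 hx₂.1
      simp only [Prod.mk.injEq, Subtype.mk.injEq]
      exact ⟨m1, m2⟩
  rw [← Nat.card_coe_set_eq, ← Nat.card_coe_set_eq, ← Nat.card_coe_set_eq,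
    Nat.card_congr (Equiv.ofBijective _ hbij), Nat.card_prod]

/-- Leading-coefficient formula from Lagrange interpolation. -/
lemma coeff_eq_sum_lagrange {F : Type*} [Field F] {n : ℕ} (v : Fin (n+1) → F)
    (hv : Function.Injective v) (f : Polynomial F) (hdeg : f.degree < ((n+1 : ℕ) : WithBot ℕ)) :
    f.coeff n = ∑ i, f.eval (v i) *
      (∏ j ∈ Finset.univ.erase i, (v i - v j))⁻¹ := by
  have hinj : Set.InjOn v (Finset.univ : Finset (Fin (n+1))) := hv.injOn
  have hcard : (Finset.univ : Finset (Fin (n+1))).card = n + 1 := by simp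
  have hf : f = Lagrange.interpolate Finset.univ v (fun i => f.eval (v i)) := by
    apply Lagrange.eq_interpolate hinj
    rwa [hcard]
  conv_lhs => rw [hf]
  rw [Lagrange.interpolate_apply, Polynomial.finset_sum_coeff]
  apply Finset.sum_congr rfl
  intro i _
  rw [Polynomial.coeff_C_mul]
  congr 1
  have hnd : (Lagrange.basis Finset.univ v i).natDegree = n := by
    rw [Lagrange.natDegree_basis hinj (Finset.mem_univ i), hcard]
    simp
  have hlc : (Lagrange.basis Finset.univ v i).coeff n =
      (Lagrange.basis Finset.univ v i).leadingCoeff := by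
    rw [Polynomial.leadingCoeff, hnd]
  rw [hlc, Lagrange.basis, Polynomial.leadingCoeff_prod]
  rw [← Finset.prod_inv_distrib]
  apply Finset.prod_congr rfl
  intro j hj
  have hij : v i ≠ v j := fun h => (Finset.ne_of_mem_erase hj) (hv h).symm
  rw [Lagrange.basisDivisor, Polynomial.leadingCoeff_mul, Polynomial.leadingCoeff_C,
    (Polynomial.monic_X_sub_C (v j)).leadingCoeff, mul_one]


lemma mult_prod_le {p : Polynomial Fq} (hp : Prime p) {ι : Type*} (s : Finset ι)
    (g : ι → Polynomial Fq) (k : ℕ) (hg0 : ∀ i ∈ s, g i ≠ 0)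
    (hgk : ∀ i ∈ s, ¬ p ^ k ∣ g i) (hk : 1 ≤ k) :
    multiplicity p (∏ i ∈ s, g i) ≤ s.card * (k - 1) := by
  induction s using Finset.induction with
  | empty => simp [multiplicity_of_one_right hp.not_unit]
  | @insert a s ha ih =>
    rw [Finset.prod_insert ha]
    have hga : g a ≠ 0 := hg0 a (Finset.mem_insert_self a s)
    have hprod : ∏ i ∈ s, g i ≠ 0 := Finset.prod_ne_zero_iff.2 fun i hi =>
      hg0 i (Finset.mem_insert_of_mem hi)
    have hfin : FiniteMultiplicity p (g a * ∏ i ∈ s, g i) :=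
      FiniteMultiplicity.of_not_isUnit hp.not_unit (mul_ne_zero hga hprod)
    rw [multiplicity_mul hp hfin, Finset.card_insert_of_notMem ha]
    have h1 : multiplicity p (g a) ≤ k - 1 := by
      have := (FiniteMultiplicity.of_not_isUnit hp.not_unit hga).multiplicity_lt_iff_not_dvd.2
        (hgk a (Finset.mem_insert_self a s))
      omega
    have h2 := ih (fun i hi => hg0 i (Finset.mem_insert_of_mem hi))
      (fun i hi => hgk i (Finset.mem_insert_of_mem hi))
    have : (s.card + 1) * (k - 1) = (k-1) + s.card * (k-1) := by ring
    omega

/-- Key valuation lemma: solutions of `f(x) ≡ 0 mod p^e` that are pairwise distinct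
mod `p^k` force `e ≤ v_p(leadingCoeff f) + d(k-1)`. -/
lemma key_val {p : Polynomial Fq} (hp : Prime p) {e k : ℕ} (hk : 1 ≤ k)
    (f : Polynomial (Polynomial Fq)) (hf0 : f ≠ 0)
    (x : Fin (f.natDegree + 1) → Polynomial Fq)
    (hxk : ∀ i j, i ≠ j → ¬ (p ^ k ∣ x i - x j))
    (he : ∀ i, p ^ e ∣ Polynomial.eval (x i) f) :
    e ≤ multiplicity p f.leadingCoeff + f.natDegree * (k - 1) := by
  classical
  obtain ⟨d, hd⟩ : ∃ d, d = f.natDegree := ⟨f.natDegree, rfl⟩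
  set K := FractionRing (Polynomial Fq)
  set φ := algebraMap (Polynomial Fq) K with hφdef
  have hφ : Function.Injective φ := IsFractionRing.injective (Polynomial Fq) K
  have hxne : ∀ i j, i ≠ j → x i ≠ x j := by
    intro i j hij h
    exact hxk i j hij (by rw [h, sub_self]; exact dvd_zero _)
  have hvinj : Function.Injective (fun i => φ (x i)) := by
    intro i j h
    by_contra hij
    exact hxne i j hij (hφ h)
  -- the Lagrange identity in K
  have hdegmap : (f.map φ).degree < ((f.natDegree+1 : ℕ) : WithBot ℕ) := by
    apply lt_of_le_of_lt (Polynomial.degree_map_le)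
    rw [Polynomial.degree_eq_natDegree hf0]
    exact_mod_cast Nat.lt_succ_self f.natDegree
  have hlag := coeff_eq_sum_lagrange (fun i => φ (x i)) hvinj (f.map φ) hdegmap
  -- definitions in O
  set W : Fin (f.natDegree+1) → Polynomial Fq := fun i => ∏ j ∈ Finset.univ.erase i, (x i - x j) with hW
  set c : Fin (f.natDegree+1) → Polynomial Fq := fun i => ∏ i' ∈ Finset.univ.erase i, W i' with hc
  have hWne : ∀ i, W i ≠ 0 := fun i => Finset.prod_ne_zero_iff.2 fun j hj =>
    sub_ne_zero.2 (hxne i j (Finset.ne_of_mem_erase hj).symm)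
  have hcne : ∀ i, c i ≠ 0 := fun i => Finset.prod_ne_zero_iff.2 fun j hj => hWne j
  have hWsplit : ∀ i, (∏ i', W i') = W i * c i := fun i =>
    (Finset.mul_prod_erase Finset.univ W (Finset.mem_univ i)).symm
  -- identity in O
  have hidO : f.leadingCoeff * (∏ i, W i) = ∑ i, Polynomial.eval (x i) f * c i := by
    apply hφ
    rw [map_mul, map_sum]
    have hcoeff : φ f.leadingCoeff = (f.map φ).coeff f.natDegree := by
      rw [Polynomial.coeff_map]; rfl
    rw [hcoeff, hlag, Finset.sum_mul]
    apply Finset.sum_congr rfl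
    intro i _
    have heval : (f.map φ).eval (φ (x i)) = φ (Polynomial.eval (x i) f) := by
      rw [Polynomial.eval_map, Polynomial.eval₂_at_apply]
    have hWm : ∏ j ∈ Finset.univ.erase i, (φ (x i) - φ (x j)) = φ (W i) := by
      rw [hW, map_prod]
      exact Finset.prod_congr rfl fun j _ => by rw [map_sub]
    rw [heval, hWm, map_mul, hWsplit i, map_mul]
    rw [← mul_assoc, mul_assoc _ _ (φ (W i)), inv_mul_cancel₀ ((map_ne_zero_iff φ hφ).2 (hWne i))]
    ring
  -- valuation bookkeeping
  have hfinc : ∀ i, FiniteMultiplicity p (c i) := fun i =>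
    FiniteMultiplicity.of_not_isUnit hp.not_unit (hcne i)
  obtain ⟨i0, -, hi0⟩ := Finset.exists_min_image Finset.univ (fun i => multiplicity p (c i))
    ⟨0, Finset.mem_univ 0⟩
  set t := multiplicity p (c i0) with ht
  have hdvdsum : p ^ (e + t) ∣ ∑ i, Polynomial.eval (x i) f * c i := by
    apply Finset.dvd_sum
    intro i _
    rw [pow_add]
    have hct : p ^ t ∣ c i :=
      dvd_trans (pow_dvd_pow p (hi0 i (Finset.mem_univ i))) (pow_multiplicity_dvd p (c i))
    exact mul_dvd_mul (he i) hct
  rw [← hidO, hWsplit i0, ← mul_assoc] at hdvdsum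
  have ha : f.leadingCoeff ≠ 0 := Polynomial.leadingCoeff_ne_zero.2 hf0
  have hne1 : f.leadingCoeff * W i0 ≠ 0 := mul_ne_zero ha (hWne i0)
  have hne2 : f.leadingCoeff * W i0 * c i0 ≠ 0 := mul_ne_zero hne1 (hcne i0)
  have hfin2 : FiniteMultiplicity p (f.leadingCoeff * W i0 * c i0) :=
    FiniteMultiplicity.of_not_isUnit hp.not_unit hne2
  have hle : e + t ≤ multiplicity p (f.leadingCoeff * W i0 * c i0) :=
    hfin2.le_multiplicity_of_pow_dvd hdvdsum
  rw [multiplicity_mul hp hfin2, multiplicity_mul hp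
    (FiniteMultiplicity.of_not_isUnit hp.not_unit hne1)] at hle
  have hWbound : multiplicity p (W i0) ≤ f.natDegree * (k - 1) := by
    have := mult_prod_le hp (Finset.univ.erase i0) (fun j => x i0 - x j) k
      (fun j hj => sub_ne_zero.2 (hxne i0 j (Finset.ne_of_mem_erase hj).symm))
      (fun j hj => by simpa using hxk i0 j (Finset.ne_of_mem_erase hj).symm) hk
    calc multiplicity p (W i0) ≤ (Finset.univ.erase i0).card * (k-1) := this
    _ = f.natDegree * (k-1) := by rw [Finset.card_erase_of_mem (Finset.mem_univ i0)]; simp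
  omega


/-- Counting bound for prime powers (integer version). -/
lemma ncard_sol_ppow_nat {p : Polynomial Fq} (hpm : p.Monic) (hirr : Irreducible p)
    {e k : ℕ} (hk1 : 1 ≤ k) (hke : k ≤ e)
    (f : Polynomial (Polynomial Fq)) (hf0 : f ≠ 0)
    (hcontra : multiplicity p f.leadingCoeff + f.natDegree * (k - 1) < e) :
    (Sol f (p ^ e)).ncard ≤ f.natDegree * Fintype.card Fq ^ (p.natDegree * (e - k)) := by
  classical
  have hp : Prime p := hirr.prime
  have hpe : (p ^ e).Monic := hpm.pow e
  have hpene : (p ^ e) ≠ 0 := hpe.ne_zero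
  have hfin := sol_finite f hpene
  set T : Finset (Polynomial Fq) := hfin.toFinset with hT
  set ρ : Polynomial Fq → Polynomial Fq := fun x => x %ₘ p ^ k with hρ
  -- image has at most d elements
  have himg : (T.image ρ).card ≤ f.natDegree := by
    by_contra hlt
    push_neg at hlt
    have hle : f.natDegree + 1 ≤ (T.image ρ).card := hlt
    obtain ⟨u, hu_sub, hu_card⟩ := Finset.exists_subset_card_eq hle
    have hequiv : Fin (f.natDegree + 1) ≃ u := (Finset.equivFinOfCardEq hu_card).symm
    have hpre : ∀ c : u, ∃ x, x ∈ T ∧ ρ x = (c : Polynomial Fq) := by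
      intro c
      have := hu_sub c.2
      rcases Finset.mem_image.1 this with ⟨x, hx, hxc⟩
      exact ⟨x, hx, hxc⟩
    choose g hg1 hg2 using hpre
    set xx : Fin (f.natDegree + 1) → Polynomial Fq := fun i => g (hequiv i) with hxx
    have hxk : ∀ i j, i ≠ j → ¬ (p ^ k ∣ xx i - xx j) := by
      intro i j hij hdvd
      have : ρ (xx i) = ρ (xx j) := (dvd_sub_iff_mod_eq (hpm.pow k)).1 hdvd
      rw [hg2, hg2] at this
      exact hij (hequiv.injective (Subtype.ext this))
    have hev : ∀ i, p ^ e ∣ Polynomial.eval (xx i) f := by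
      intro i
      have := hg1 (hequiv i)
      rw [hT, Set.Finite.mem_toFinset] at this
      exact this.2
    exact absurd (key_val hp hk1 f hf0 xx hxk hev) (not_le.2 hcontra)
  -- fibers are small
  have hfiber : ∀ c ∈ T.image ρ,
      (T.filter fun x => ρ x = c).card ≤ Fintype.card Fq ^ (p.natDegree * (e - k)) := by
    intro c _
    have hsub : ↑(T.filter fun x => ρ x = c) ⊆
        {x : Polynomial Fq | x.degree < (p ^ e).degree ∧ x %ₘ p ^ k = c} := by
      intro x hx
      rw [Finset.coe_filter] at hx
      obtain ⟨hxT, hxc⟩ := hx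
      rw [hT, Set.Finite.mem_toFinset] at hxT
      exact ⟨hxT.1, hxc⟩
    have hcount := ncard_fiber_le (b := p ^ k) (r := p ^ e) (hpm.pow k) hpene
      (by rw [Polynomial.natDegree_pow, Polynomial.natDegree_pow]
          exact Nat.mul_le_mul_right _ hke) c
    have : ((T.filter fun x => ρ x = c) : Set (Polynomial Fq)).ncard ≤
        Fintype.card Fq ^ ((p ^ e).natDegree - (p ^ k).natDegree) := by
      apply le_trans (Set.ncard_le_ncard hsub ?_) hcount
      exact (finite_degLT (p ^ e).natDegree).subset (fun x hx => by
        simpa [Polynomial.degree_eq_natDegree hpene] using hx.1)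
    rw [Set.ncard_coe_finset] at this
    have hexp : (p ^ e).natDegree - (p ^ k).natDegree = p.natDegree * (e - k) := by
      rw [Polynomial.natDegree_pow, Polynomial.natDegree_pow, ← Nat.sub_mul, Nat.mul_comm]
    rwa [hexp] at this
  have := Finset.card_le_mul_card_image (s := T) (f := ρ)
    (Fintype.card Fq ^ (p.natDegree * (e - k))) hfiber
  have hTcard : T.card = (Sol f (p ^ e)).ncard := (Set.ncard_eq_toFinset_card _ hfin).symm
  calc (Sol f (p ^ e)).ncard = T.card := hTcard.symm
  _ ≤ Fintype.card Fq ^ (p.natDegree * (e - k)) * (T.image ρ).card := this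
  _ ≤ Fintype.card Fq ^ (p.natDegree * (e - k)) * f.natDegree := by
      exact Nat.mul_le_mul_left _ himg
  _ = f.natDegree * Fintype.card Fq ^ (p.natDegree * (e - k)) := Nat.mul_comm _ _


lemma one_le_qr : (1 : ℝ) ≤ (Fintype.card Fq : ℝ) := by
  exact_mod_cast Fintype.card_pos

lemma qr_pos : (0 : ℝ) < (Fintype.card Fq : ℝ) := lt_of_lt_of_le one_pos one_le_qr

/-- real-valued prime power bound -/
lemma ncard_sol_ppow_real {p : Polynomial Fq} (hpm : p.Monic) (hirr : Irreducible p)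
    (f : Polynomial (Polynomial Fq)) (hf0 : f ≠ 0) (hd1 : 1 ≤ f.natDegree)
    {e : ℕ} (he : 1 ≤ e) :
    ((Sol f (p ^ e)).ncard : ℝ) ≤ (f.natDegree : ℝ) *
      (Fintype.card Fq : ℝ) ^
        (((multiplicity p f.leadingCoeff * p.natDegree : ℕ) : ℝ) / (f.natDegree : ℝ) +
          ((e * p.natDegree : ℕ) : ℝ) * (1 - 1 / (f.natDegree : ℝ))) := by
  classical
  set d := f.natDegree with hd
  set m := p.natDegree with hm
  set v := multiplicity p f.leadingCoeff with hv
  have hD : (1:ℝ) ≤ (d:ℝ) := by exact_mod_cast hd1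
  have hD0 : (0:ℝ) < (d:ℝ) := lt_of_lt_of_le one_pos hD
  have hq1 : (1:ℝ) ≤ (Fintype.card Fq : ℝ) := one_le_qr
  set X : ℝ := ((v * m : ℕ) : ℝ) / (d:ℝ) + ((e * m : ℕ) : ℝ) * (1 - 1/(d:ℝ)) with hX
  have hM : (0:ℝ) ≤ (m:ℝ) := Nat.cast_nonneg _
  by_cases hve : e ≤ v
  · -- trivial bound
    have htriv : (Sol f (p ^ e)).ncard ≤ Fintype.card Fq ^ (e * m) := by
      rw [← ncard_degLT (Fq := Fq) (e * m)]
      apply Set.ncard_le_ncard ?_ (finite_degLT _)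
      intro x hx
      have h1 := hx.1
      have hpe : (p ^ e) ≠ 0 := (hpm.pow e).ne_zero
      simp only [Set.mem_setOf_eq]
      rwa [Polynomial.degree_eq_natDegree hpe, Polynomial.natDegree_pow] at h1
    have h1 : ((Sol f (p ^ e)).ncard : ℝ) ≤ (Fintype.card Fq : ℝ) ^ (((e * m : ℕ):ℝ)) := by
      rw [Real.rpow_natCast]
      exact_mod_cast htriv
    have h2 : (((e * m : ℕ)):ℝ) ≤ X := by
      rw [hX]
      push_cast
      have hVE : (e:ℝ) ≤ (v:ℝ) := by exact_mod_cast hve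
      have key : (e:ℝ) * m / d ≤ (v:ℝ) * m / d := by
        gcongr
      have expand : (e:ℝ) * m = (e:ℝ)*m/d + (e:ℝ)*m*(1 - 1/d) := by
        field_simp
        ring
      linarith
    calc ((Sol f (p ^ e)).ncard : ℝ) ≤ (Fintype.card Fq : ℝ) ^ (((e * m : ℕ):ℝ)) := h1
    _ ≤ (Fintype.card Fq : ℝ) ^ X := Real.rpow_le_rpow_of_exponent_le hq1 h2
    _ ≤ (d:ℝ) * (Fintype.card Fq : ℝ) ^ X :=
        le_mul_of_one_le_left (Real.rpow_nonneg (le_trans zero_le_one hq1) X) hD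
  · -- main case
    push_neg at hve  -- v < e
    set k : ℕ := (e - v - 1) / d + 1 with hk
    have hk1 : 1 ≤ k := Nat.le_add_left 1 _
    have hq0 := Nat.div_add_mod (e - v - 1) d
    have hdk1 : d * (k - 1) ≤ e - v - 1 := by
      simp only [hk, Nat.add_sub_cancel]
      rw [Nat.mul_comm]
      exact Nat.div_mul_le_self _ _
    have hke : k ≤ e := by
      have h1 : (e - v - 1) / d ≤ e - v - 1 := Nat.div_le_self _ _
      omega
    have hcontra : v + d * (k - 1) < e := by omega
    have hdk : e - v ≤ d * k := by
      have hmod : (e - v - 1) % d < d := Nat.mod_lt _ (by omega)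
      have hx : d * k = d * ((e - v - 1)/d) + d := by
        rw [hk, Nat.mul_add, Nat.mul_one]
      omega
    have hnat := ncard_sol_ppow_nat hpm hirr hk1 hke f hf0 hcontra
    have h1 : ((Sol f (p ^ e)).ncard : ℝ) ≤
        (d:ℝ) * (Fintype.card Fq : ℝ) ^ (((m * (e - k) : ℕ)):ℝ) := by
      rw [Real.rpow_natCast]
      exact_mod_cast hnat
    have h2 : (((m * (e - k) : ℕ)):ℝ) ≤ X := by
      rw [hX]
      have hdkR : (e:ℝ) - (v:ℝ) ≤ (d:ℝ) * (k:ℝ) := by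
        have hthis : ((e - v : ℕ):ℝ) ≤ ((d * k : ℕ):ℝ) := by exact_mod_cast hdk
        rw [Nat.cast_sub (le_of_lt hve), Nat.cast_mul] at hthis
        linarith
      have hcast : ((m * (e - k) : ℕ):ℝ) = (m:ℝ) * ((e:ℝ) - (k:ℝ)) := by
        rw [Nat.cast_mul, Nat.cast_sub hke]
      have hcast2 : ((v * m : ℕ):ℝ) = (v:ℝ) * m := by push_cast; ring
      have hcast3 : ((e * m : ℕ):ℝ) = (e:ℝ) * m := by push_cast; ring
      rw [hcast, hcast2, hcast3]
      have hnum : (0:ℝ) ≤ ((m:ℝ)*((d:ℝ)*(k:ℝ)) - (m:ℝ)*((e:ℝ)-(v:ℝ))) / (d:ℝ) := by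
        apply div_nonneg ?_ (le_of_lt hD0)
        nlinarith [mul_le_mul_of_nonneg_left hdkR hM]
      have expand : (v:ℝ)*m/d + (e:ℝ)*m*(1-1/d) - (m:ℝ)*((e:ℝ)-(k:ℝ)) =
          ((m:ℝ)*((d:ℝ)*(k:ℝ)) - (m:ℝ)*((e:ℝ)-(v:ℝ))) / (d:ℝ) := by
        field_simp
        ring
      linarith [expand ▸ hnum]
    calc ((Sol f (p ^ e)).ncard : ℝ)
        ≤ (d:ℝ) * (Fintype.card Fq : ℝ) ^ (((m * (e - k) : ℕ)):ℝ) := h1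
    _ ≤ (d:ℝ) * (Fintype.card Fq : ℝ) ^ X :=
        mul_le_mul_of_nonneg_left (Real.rpow_le_rpow_of_exponent_le hq1 h2) (le_of_lt hD0)


def PSet (r : Polynomial Fq) : Set (Polynomial Fq) :=
  {p | p.Monic ∧ Irreducible p ∧ p ∣ r}


lemma pset_finite {r : Polynomial Fq} (hr : r ≠ 0) : (PSet r).Finite := by
  apply (finite_degLT (r.natDegree + 1)).subset
  intro p hp
  have h1 : p.degree ≤ r.degree := Polynomial.degree_le_of_dvd hp.2.2 hr
  have h2 : r.degree = (r.natDegree : WithBot ℕ) := Polynomial.degree_eq_natDegree hr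
  simp only [Set.mem_setOf_eq]
  calc p.degree ≤ (r.natDegree : WithBot ℕ) := h2 ▸ h1
  _ < ((r.natDegree + 1 : ℕ) : WithBot ℕ) := by exact_mod_cast Nat.lt_succ_self _

noncomputable def Pfin (r : Polynomial Fq) : Finset (Polynomial Fq) :=
  if h : r = 0 then ∅ else (pset_finite h).toFinset

lemma mem_Pfin {r p : Polynomial Fq} (hr : r ≠ 0) :
    p ∈ Pfin r ↔ (p.Monic ∧ Irreducible p ∧ p ∣ r) := by
  rw [Pfin, dif_neg hr, Set.Finite.mem_toFinset]
  rfl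

lemma ncard_PSet {r : Polynomial Fq} (hr : r ≠ 0) : (PSet r).ncard = (Pfin r).card := by
  rw [Pfin, dif_neg hr, Set.ncard_eq_toFinset_card _ (pset_finite hr)]

lemma Pfin_one : (Pfin (1 : Polynomial Fq)) = ∅ := by
  ext p
  rw [mem_Pfin one_ne_zero]
  simp only [Finset.notMem_empty, iff_false]
  rintro ⟨-, hirr, hdvd⟩
  exact hirr.not_isUnit (isUnit_of_dvd_one hdvd)

/-- The weight function. -/
noncomputable def Wt (f : Polynomial (Polynomial Fq)) (r : Polynomial Fq) : ℕ :=
  ∑ p ∈ Pfin r, multiplicity p f.leadingCoeff * p.natDegree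

lemma sol_one_bound (f : Polynomial (Polynomial Fq)) :
    ((Sol f (1 : Polynomial Fq)).ncard : ℝ) ≤ 1 := by
  have hsub : Sol f 1 ⊆ {0} := by
    intro x hx
    have h1 := hx.1
    rw [Polynomial.degree_one] at h1
    have hbot : x.degree = ⊥ := by
      rcases hdeg : Polynomial.degree x with _ | k
      · rfl
      · exfalso
        rw [hdeg] at h1
        exact absurd h1 (fun h => Nat.not_lt_zero k (WithBot.coe_lt_coe.1 h))
    simp only [Set.mem_singleton_iff]
    exact Polynomial.degree_eq_bot.1 hbot
  have hle : (Sol f 1).ncard ≤ 1 := by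
    calc (Sol f 1).ncard ≤ ({0} : Set (Polynomial Fq)).ncard :=
      Set.ncard_le_ncard hsub (Set.finite_singleton 0)
    _ = 1 := Set.ncard_singleton 0
  exact_mod_cast hle

lemma bound_at_one (f : Polynomial (Polynomial Fq)) :
    ((Sol f (1:Polynomial Fq)).ncard : ℝ) ≤
      (f.natDegree : ℝ) ^ ((Pfin (1:Polynomial Fq)).card) *
      (Fintype.card Fq : ℝ) ^ ((Wt f 1 : ℝ) / (f.natDegree : ℝ) +
        ((1:Polynomial Fq).natDegree : ℝ) * (1 - 1 / (f.natDegree : ℝ))) := by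
  have hrhs : (f.natDegree : ℝ) ^ ((Pfin (1:Polynomial Fq)).card) *
      (Fintype.card Fq : ℝ) ^ ((Wt f 1 : ℝ) / (f.natDegree : ℝ) +
        ((1:Polynomial Fq).natDegree : ℝ) * (1 - 1 / (f.natDegree : ℝ))) = 1 := by
    simp [Wt, Pfin_one]
  rw [hrhs]
  exact sol_one_bound f

lemma main_bound (f : Polynomial (Polynomial Fq)) (hf0 : f ≠ 0) (hd1 : 1 ≤ f.natDegree) :
    ∀ n : ℕ, ∀ r : Polynomial Fq, r.natDegree ≤ n → r.Monic →
    ((Sol f r).ncard : ℝ) ≤ (f.natDegree : ℝ) ^ ((Pfin r).card) *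
      (Fintype.card Fq : ℝ) ^ ((Wt f r : ℝ) / (f.natDegree : ℝ) +
        (r.natDegree : ℝ) * (1 - 1 / (f.natDegree : ℝ))) := by
  have hq1 : (1:ℝ) ≤ (Fintype.card Fq : ℝ) := one_le_qr
  have hq0 : (0:ℝ) < (Fintype.card Fq : ℝ) := lt_of_lt_of_le one_pos hq1
  intro n
  induction n with
  | zero =>
    intro r hrn hrm
    have hr1 : r = 1 := hrm.natDegree_eq_zero.1 (Nat.le_zero.1 hrn)
    subst hr1
    exact bound_at_one f
  | succ n ih =>
    intro r hrn hrm
    by_cases hr1 : r.natDegree = 0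
    · have hr1' : r = 1 := hrm.natDegree_eq_zero.1 hr1
      subst hr1'
      exact bound_at_one f
    · have hrne : r ≠ 0 := hrm.ne_zero
      have hrnu : ¬IsUnit r := fun hu => hr1 (Polynomial.natDegree_eq_zero_of_isUnit hu)
      obtain ⟨p₀, hp₀irr, hp₀dvd⟩ :=
        WfDvdMonoid.exists_irreducible_factor hrnu hrne
      have hp₀ne : p₀ ≠ 0 := hp₀irr.ne_zero
      set p := normalize p₀ with hp
      have hpm : p.Monic := Polynomial.monic_normalize hp₀ne
      have hpirr : Irreducible p := (associated_normalize p₀).irreducible hp₀irr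
      have hpprime : Prime p := hpirr.prime
      have hpdvd : p ∣ r := (normalize_dvd_iff).2 hp₀dvd
      have hpdeg1 : 1 ≤ p.natDegree := by
        rcases Nat.eq_zero_or_pos p.natDegree with h0 | h1
        · exact absurd (hpm.natDegree_eq_zero.1 h0 ▸ isUnit_one)
            hpirr.not_isUnit
        · exact h1
      set e := multiplicity p r with he
      have hfinr : FiniteMultiplicity p r :=
        FiniteMultiplicity.of_not_isUnit hpirr.not_isUnit hrne
      have he1 : 1 ≤ e := multiplicity_pos_of_dvd hpdvd
      obtain ⟨s, hs⟩ : p ^ e ∣ r := pow_multiplicity_dvd p r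
      have hnds : ¬ p ∣ s := by
        intro hds
        have hdvd2 : p ^ (e + 1) ∣ r := by
          rw [hs, pow_succ]
          exact mul_dvd_mul_left (p ^ e) hds
        exact (hfinr.not_pow_dvd_of_multiplicity_lt (Nat.lt_succ_self e)) hdvd2
      have hpem : (p ^ e).Monic := hpm.pow e
      have hsm : s.Monic := hpem.of_mul_monic_left (hs ▸ hrm)
      have hsne : s ≠ 0 := hsm.ne_zero
      have hcop : IsCoprime (p ^ e) s :=
        ((hpirr.coprime_iff_not_dvd).2 hnds).pow_left
      have hdeg : r.natDegree = e * p.natDegree + s.natDegree := by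
        rw [hs, Polynomial.natDegree_mul hpem.ne_zero hsne, Polynomial.natDegree_pow]
      have hsn : s.natDegree ≤ n := by
        have h1 : 1 ≤ e * p.natDegree := Nat.mul_le_mul he1 hpdeg1
        omega
      have ihs := ih s hsn hsm
      have hppow := ncard_sol_ppow_real hpm hpirr f hf0 hd1 he1
      set A : ℝ := ((multiplicity p f.leadingCoeff * p.natDegree : ℕ) : ℝ) / (f.natDegree : ℝ) +
          ((e * p.natDegree : ℕ) : ℝ) * (1 - 1 / (f.natDegree : ℝ)) with hA
      set B : ℝ := (Wt f s : ℝ) / (f.natDegree : ℝ) +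
          (s.natDegree : ℝ) * (1 - 1 / (f.natDegree : ℝ)) with hB
      -- prime sets
      have hPr : ∀ π, π ∈ Pfin r ↔ π = p ∨ π ∈ Pfin s := by
        intro π
        rw [mem_Pfin hrne, mem_Pfin hsne]
        constructor
        · rintro ⟨πm, πirr, πdvd⟩
          rw [hs] at πdvd
          rcases (πirr.prime.dvd_or_dvd πdvd) with h | h
          · left
            have hπp : π ∣ p := πirr.prime.dvd_of_dvd_pow h
            exact Polynomial.eq_of_monic_of_associated πm hpm
              (πirr.associated_of_dvd hpirr hπp)
          · exact Or.inr ⟨πm, πirr, h⟩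
        · rintro (rfl | ⟨πm, πirr, πdvd⟩)
          · exact ⟨hpm, hpirr, hpdvd⟩
          · exact ⟨πm, πirr, πdvd.trans ⟨p ^ e, by rw [hs]; ring⟩⟩
      have hpnotins : p ∉ Pfin s := by
        rw [mem_Pfin hsne]
        rintro ⟨-, -, hds⟩
        exact hnds hds
      have hPfin_r : Pfin r = insert p (Pfin s) := by
        ext π
        rw [hPr, Finset.mem_insert]
      have hcard : (Pfin r).card = (Pfin s).card + 1 := by
        rw [hPfin_r, Finset.card_insert_of_notMem hpnotins]
      have hWt : Wt f r = multiplicity p f.leadingCoeff * p.natDegree + Wt f s := by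
        rw [Wt, hPfin_r, Finset.sum_insert hpnotins]
        rfl
      -- CRT
      have hcrt : (Sol f r).ncard = (Sol f (p ^ e)).ncard * (Sol f s).ncard := by
        rw [hs]
        exact ncard_sol_mul f hpem hsm hcop
      -- combine
      have hcast : ((Sol f r).ncard : ℝ) =
          ((Sol f (p ^ e)).ncard : ℝ) * ((Sol f s).ncard : ℝ) := by
        rw [hcrt]; push_cast; ring
      rw [hcast]
      have hnn2 : (0:ℝ) ≤ (f.natDegree : ℝ) * (Fintype.card Fq : ℝ) ^ A :=
        mul_nonneg (Nat.cast_nonneg _) (Real.rpow_nonneg (le_of_lt hq0) _)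
      have hmul := mul_le_mul hppow ihs (Nat.cast_nonneg _) hnn2
      apply le_trans hmul (le_of_eq ?_)
      have hmerge : (Fintype.card Fq : ℝ) ^ A * (Fintype.card Fq : ℝ) ^ B =
          (Fintype.card Fq : ℝ) ^ (A + B) := (Real.rpow_add hq0 _ _).symm
      have hAB : A + B = (Wt f r : ℝ) / (f.natDegree : ℝ) +
          (r.natDegree : ℝ) * (1 - 1 / (f.natDegree : ℝ)) := by
        rw [hA, hB, hWt, hdeg]
        push_cast
        ring
      calc ((f.natDegree : ℝ) * (Fintype.card Fq : ℝ) ^ A) *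
            ((f.natDegree : ℝ) ^ ((Pfin s).card) * (Fintype.card Fq : ℝ) ^ B)
          = ((f.natDegree : ℝ) ^ ((Pfin s).card) * (f.natDegree : ℝ)) *
            ((Fintype.card Fq : ℝ) ^ A * (Fintype.card Fq : ℝ) ^ B) := by ring
        _ = (f.natDegree : ℝ) ^ ((Pfin s).card + 1) * (Fintype.card Fq : ℝ) ^ (A + B) := by
            rw [hmerge, pow_succ]
        _ = (f.natDegree : ℝ) ^ ((Pfin r).card) * (Fintype.card Fq : ℝ) ^
              ((Wt f r : ℝ) / (f.natDegree : ℝ) +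
                (r.natDegree : ℝ) * (1 - 1 / (f.natDegree : ℝ))) := by
            rw [hAB, hcard]


lemma wt_le (f : Polynomial (Polynomial Fq)) (hf0 : f ≠ 0) {r : Polynomial Fq} (hr : r ≠ 0) :
    Wt f r ≤ f.leadingCoeff.natDegree := by
  classical
  have ha : f.leadingCoeff ≠ 0 := Polynomial.leadingCoeff_ne_zero.2 hf0
  set g : Polynomial Fq := ∏ p ∈ Pfin r, p ^ (multiplicity p f.leadingCoeff) with hg
  have hdvd : g ∣ f.leadingCoeff := by
    apply Finset.prod_dvd_of_coprime
    · intro π hπ π' hπ' hne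
      rw [Finset.mem_coe, mem_Pfin hr] at hπ hπ'
      have hnd : ¬ π ∣ π' := by
        intro hd
        exact hne (Polynomial.eq_of_monic_of_associated hπ.1 hπ'.1
          (hπ.2.1.associated_of_dvd hπ'.2.1 hd))
      have hco : IsCoprime π π' := (hπ.2.1.coprime_iff_not_dvd).2 hnd
      exact (hco.pow : IsCoprime _ _)
    · intro p _
      exact pow_multiplicity_dvd p f.leadingCoeff
  have hgnd : g.natDegree = Wt f r := by
    rw [hg, Polynomial.natDegree_prod _ _ (fun p hp => ?_)]
    · apply Finset.sum_congr rfl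
      intro p hp
      rw [Polynomial.natDegree_pow]
    · rw [mem_Pfin hr] at hp
      exact pow_ne_zero _ hp.2.1.ne_zero
  rw [← hgnd]
  exact Polynomial.natDegree_le_of_dvd hdvd ha


end UZD

section Main
open UZD

/-- if `f ∈ F_q[t][x]` has leading term `a·x^d` with `a ≠ 0`, `d ≥ 1`, then
there is `A_d > 0` such that for every monic `r`, the number `N(f;r)` of solutions
`x mod r` of `f(x) ≡ 0 (mod r)` satisfies `N(f;r) ≤ A_d^{ω(r)} |a|^{1/d} |r|^{1-1/d}`,
where `ω(r)` is the number of distinct monic irreducible factors of `r` and `|u| = q^{deg u}`. -/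
theorem univariate_zero_density_mod_r (Fq : Type*) [Field Fq] [Fintype Fq]
    (d : ℕ) (hd : 1 ≤ d) :
    ∃ A : ℝ, 0 < A ∧
      ∀ f : Polynomial (Polynomial Fq), f ≠ 0 → f.natDegree = d →
      ∀ r : Polynomial Fq, r.Monic →
        (Set.ncard {x : Polynomial Fq | x.degree < r.degree ∧ r ∣ Polynomial.eval x f} : ℝ) ≤
          A ^ (Set.ncard {p : Polynomial Fq | p.Monic ∧ Irreducible p ∧ p ∣ r}) *
            ((Fintype.card Fq : ℝ) ^ f.leadingCoeff.natDegree) ^ ((1 : ℝ) / d) *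
            ((Fintype.card Fq : ℝ) ^ r.natDegree) ^ (1 - (1 : ℝ) / d) := by
  refine ⟨(d : ℝ), by exact_mod_cast Nat.lt_of_lt_of_le Nat.zero_lt_one hd, ?_⟩
  intro f hf0 hfd r hrm
  subst hfd
  have hd1 : 1 ≤ f.natDegree := hd
  have hq1 : (1:ℝ) ≤ (Fintype.card Fq : ℝ) := one_le_qr
  have hq0 : (0:ℝ) < (Fintype.card Fq : ℝ) := lt_of_lt_of_le one_pos hq1
  have hrne : r ≠ 0 := hrm.ne_zero
  have hmain := main_bound f hf0 hd1 r.natDegree r le_rfl hrm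
  have hwt := wt_le f hf0 hrne
  have hD0 : (0:ℝ) < (f.natDegree : ℝ) := by exact_mod_cast Nat.lt_of_lt_of_le Nat.zero_lt_one hd1
  -- monotonicity in the weight
  have hexp_le : ((Wt f r : ℝ) / (f.natDegree : ℝ) +
        (r.natDegree : ℝ) * (1 - 1 / (f.natDegree : ℝ))) ≤
      ((f.leadingCoeff.natDegree : ℝ) / (f.natDegree : ℝ) +
        (r.natDegree : ℝ) * (1 - 1 / (f.natDegree : ℝ))) := by
    have h1 : ((Wt f r : ℝ)) ≤ ((f.leadingCoeff.natDegree : ℝ)) := by exact_mod_cast hwt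
    have h2 : (Wt f r : ℝ) / (f.natDegree : ℝ) ≤
        (f.leadingCoeff.natDegree : ℝ) / (f.natDegree : ℝ) := by gcongr
    linarith
  have hstep : ((Sol f r).ncard : ℝ) ≤ (f.natDegree : ℝ) ^ ((Pfin r).card) *
      (Fintype.card Fq : ℝ) ^ (((f.leadingCoeff.natDegree : ℝ)) / (f.natDegree : ℝ) +
        (r.natDegree : ℝ) * (1 - 1 / (f.natDegree : ℝ))) := by
    apply le_trans hmain
    apply mul_le_mul_of_nonneg_left (Real.rpow_le_rpow_of_exponent_le hq1 hexp_le)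
      (by positivity)
  -- rewrite RHS to the target shape
  have hsplit : (Fintype.card Fq : ℝ) ^ (((f.leadingCoeff.natDegree : ℝ)) / (f.natDegree : ℝ) +
        (r.natDegree : ℝ) * (1 - 1 / (f.natDegree : ℝ))) =
      ((Fintype.card Fq : ℝ) ^ f.leadingCoeff.natDegree) ^ ((1 : ℝ) / f.natDegree) *
      ((Fintype.card Fq : ℝ) ^ r.natDegree) ^ (1 - (1 : ℝ) / f.natDegree) := by
    rw [Real.rpow_add hq0]
    congr 1
    · rw [← Real.rpow_natCast (Fintype.card Fq : ℝ) f.leadingCoeff.natDegree,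
        ← Real.rpow_mul (le_of_lt hq0)]
      congr 1
      ring
    · rw [← Real.rpow_natCast (Fintype.card Fq : ℝ) r.natDegree,
        ← Real.rpow_mul (le_of_lt hq0)]
  have hω : Set.ncard {p : Polynomial Fq | p.Monic ∧ Irreducible p ∧ p ∣ r} = (Pfin r).card :=
    ncard_PSet hrne
  show ((Sol f r).ncard : ℝ) ≤ _
  rw [hω]
  calc ((Sol f r).ncard : ℝ) ≤ _ := hstep
  _ = (f.natDegree:ℝ) ^ ((Pfin r).card) *
      ((Fintype.card Fq : ℝ) ^ f.leadingCoeff.natDegree) ^ ((1 : ℝ) / f.natDegree) *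
      ((Fintype.card Fq : ℝ) ^ r.natDegree) ^ (1 - (1 : ℝ) / f.natDegree) := by
    rw [hsplit]; ring

end Main
end

section
/- Small lift in a Zariski-open set via the combinatorial nullstellensatz: let n = 6, let F*(c) be the dual form of x_1^3+…+x_6^3 (a form of degree 3·2^4 = 48 in c_1,…,c_6), and let H(c) = c_1⋯c_6·F*(c). For any r_1, r_2 monic in F_q[t] and any d ∈ F_q[t]^6 with max_i |d_i| ≤ |r_1 r_2|, there exists c ∈ F_q[t]^6 with c ≡ d (mod r_1 r_2), max_i |c_i| ≤ q^6 |r_1 r_2|, and H(c) ≠ 0. -/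
open scoped Classical

noncomputable section

/-- The polynomial `G(b) = ∏_{ε} (b₁³ ± b₂³ ± ⋯ ± b₆³)` (product over the `2⁵` sign choices
with the sign of `b₁` fixed to `+`).  The dual form `F*` of `x₁³ + ⋯ + x₆³` is the unique
polynomial with `F*(b₁²,…,b₆²) = G(b)`. -/
def dualG (Fq : Type*) [Field Fq] [Fintype Fq] : MvPolynomial (Fin 6) (Polynomial Fq) :=
  ∏ ε ∈ Finset.univ.filter (fun ε : Fin 6 → Bool => ε 0 = false),
    ∑ i : Fin 6, (if ε i then -1 else 1) * MvPolynomial.X i ^ 3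


/-- Combinatorial-nullstellensatz-style grid lemma over an integral domain. -/
lemma grid_eval_ne_zero {R : Type*} [CommRing R] [IsDomain R] :
    ∀ (n : ℕ) (F : MvPolynomial (Fin n) R), F ≠ 0 →
      ∀ S : Fin n → Finset R, (∀ i, F.degreeOf i < (S i).card) →
        ∃ x : Fin n → R, (∀ i, x i ∈ S i) ∧ MvPolynomial.eval x F ≠ 0 := by
  intro n
  induction n with
  | zero =>
    intro F hF S _
    refine ⟨Fin.elim0, fun i => i.elim0, ?_⟩
    obtain ⟨a, rfl⟩ := MvPolynomial.C_surjective (Fin 0) F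
    simpa using fun h => hF (by simp [h])
  | succ n ih =>
    intro F hF S hS
    set p := MvPolynomial.finSuccEquiv R n F with hp
    have hp0 : p ≠ 0 := by
      simpa [hp] using (map_ne_zero_iff _ (MvPolynomial.finSuccEquiv R n).injective).mpr hF
    have hlead : p.leadingCoeff ≠ 0 := Polynomial.leadingCoeff_ne_zero.mpr hp0
    obtain ⟨x, hxS, hx⟩ := ih p.leadingCoeff hlead (fun j => S j.succ) (fun j =>
      lt_of_le_of_lt (MvPolynomial.degreeOf_coeff_finSuccEquiv F j p.natDegree) (hS j.succ))
    set q := p.map (MvPolynomial.eval x) with hq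
    have hq0 : q ≠ 0 := by
      intro h
      apply hx
      have h2 := congrArg (fun g => Polynomial.coeff g p.natDegree) h
      simp only [hq, Polynomial.coeff_map, Polynomial.coeff_zero] at h2
      rw [Polynomial.leadingCoeff] at hlead ⊢
      exact h2
    have hqd : q.natDegree < (S 0).card :=
      lt_of_le_of_lt (Polynomial.natDegree_map_le)
        (by rw [hp, MvPolynomial.natDegree_finSuccEquiv]; exact hS 0)
    have : ∃ y ∈ S 0, Polynomial.eval y q ≠ 0 := by
      by_contra h
      push_neg at h
      have hsub : S 0 ⊆ q.roots.toFinset := by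
        intro y hy
        simp [Multiset.mem_toFinset, Polynomial.mem_roots hq0, h y hy]
      have := Finset.card_le_card hsub
      have h2 := Multiset.toFinset_card_le q.roots
      have h3 := Polynomial.card_roots' q
      omega
    obtain ⟨y, hyS, hy⟩ := this
    refine ⟨Fin.cons y x, ?_, ?_⟩
    · intro i
      refine Fin.cases ?_ ?_ i
      · exact hyS
      · exact hxS
    · rw [MvPolynomial.eval_eq_eval_mv_eval']
      exact hy

lemma bind_sq_eq {R : Type*} [CommRing R] {σ : Type*} (F : MvPolynomial σ R) :
    MvPolynomial.bind₁ (fun i : σ => (MvPolynomial.X i : MvPolynomial σ R) ^ 2) F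
      = ∑ s ∈ F.support, MvPolynomial.monomial (2 • s) (F.coeff s) := by
  conv_lhs => rw [F.as_sum]
  rw [map_sum]
  refine Finset.sum_congr rfl fun u _ => ?_
  rw [MvPolynomial.bind₁_monomial, MvPolynomial.monomial_eq]
  have hsupp : (2 • u).support = u.support := by
    ext i
    simp [Finsupp.mem_support_iff]
  rw [Finsupp.prod, hsupp]
  congr 1
  refine Finset.prod_congr rfl fun i _ => ?_
  rw [Finsupp.smul_apply, smul_eq_mul, pow_mul]

lemma coeff_bind_sq {R : Type*} [CommRing R] {σ : Type*} (F : MvPolynomial σ R) (s : σ →₀ ℕ) :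
    (MvPolynomial.bind₁ (fun i : σ => (MvPolynomial.X i : MvPolynomial σ R) ^ 2) F).coeff (2 • s)
      = F.coeff s := by
  rw [bind_sq_eq]
  have hinj : ∀ u : σ →₀ ℕ, 2 • u = 2 • s → u = s := by
    intro u h
    ext i
    have := congrFun (congrArg (fun f : σ →₀ ℕ => (f : σ → ℕ)) h) i
    simp only [Finsupp.coe_smul, Pi.smul_apply, smul_eq_mul] at this
    omega
  rw [MvPolynomial.coeff_sum]
  by_cases hs : s ∈ F.support
  · rw [Finset.sum_eq_single s]
    · simp [MvPolynomial.coeff_monomial]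
    · intro u _ hu
      rw [MvPolynomial.coeff_monomial, if_neg (fun h => hu (hinj u h))]
    · intro h; exact absurd hs h
  · rw [Finset.sum_eq_zero, MvPolynomial.notMem_support_iff.mp hs]
    intro u hu
    rw [MvPolynomial.coeff_monomial, if_neg (fun h => (hinj u h ▸ hu : s ∈ F.support) |> hs)]

lemma dualG_ne_zero (Fq : Type*) [Field Fq] [Fintype Fq] : dualG Fq ≠ 0 := by
  intro h
  have := congrArg (MvPolynomial.eval (fun i : Fin 6 => if i = 0 then (1 : Polynomial Fq) else 0)) h
  rw [map_zero, dualG, map_prod] at this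
  rw [Finset.prod_eq_one ?_] at this
  · exact one_ne_zero this
  · intro ε hε
    have hε0 : ε 0 = false := (Finset.mem_filter.mp hε).2
    rw [map_sum]
    rw [Fin.sum_univ_six]
    simp [hε0, apply_ite (MvPolynomial.eval fun i : Fin 6 => if i = 0 then (1 : Polynomial Fq) else 0)]

lemma totalDegree_dualG_le (Fq : Type*) [Field Fq] [Fintype Fq] :
    (dualG Fq).totalDegree ≤ 192 := by
  refine (MvPolynomial.totalDegree_finset_prod _ _).trans ?_
  have h1 : ∀ ε : Fin 6 → Bool,
      (∑ i : Fin 6, (if ε i then -1 else 1) * MvPolynomial.X i ^ 3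
        : MvPolynomial (Fin 6) (Polynomial Fq)).totalDegree ≤ 3 := by
    intro ε
    refine MvPolynomial.totalDegree_finsetSum_le fun i _ => ?_
    refine (MvPolynomial.totalDegree_mul _ _).trans ?_
    have : ((if ε i then -1 else 1 : MvPolynomial (Fin 6) (Polynomial Fq))).totalDegree = 0 := by
      split <;> simp
    rw [this, MvPolynomial.totalDegree_X_pow]
  refine le_trans (Finset.sum_le_card_nsmul _ _ 3 fun ε _ => h1 ε) ?_
  rw [smul_eq_mul]
  have hc : (Finset.univ.filter (fun ε : Fin 6 → Bool => ε 0 = false)).card ≤ 64 := by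
    refine (Finset.card_filter_le _ _).trans ?_
    simp [Finset.card_univ]
  exact le_trans (Nat.mul_le_mul_right 3 hc) (by norm_num)

/-- small lift in a Zariski-open set: with `F*` the dual form of
`x₁³+⋯+x₆³` and `H(c) = c₁⋯c₆·F*(c)`, for any monic `r₁, r₂ ∈ F_q[t]` and any
`d ∈ F_q[t]⁶` with `max|d_i| ≤ |r₁r₂|`, there is `c ≡ d (mod r₁r₂)` with
`max|c_i| ≤ q⁶|r₁r₂|` and `H(c) ≠ 0`. -/
theorem small_lift_in_zariski_open (Fq : Type*) [Field Fq] [Fintype Fq]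
    (Fstar : MvPolynomial (Fin 6) (Polynomial Fq))
    (hFstar : MvPolynomial.bind₁ (fun i : Fin 6 => (MvPolynomial.X i) ^ 2) Fstar = dualG Fq)
    (r₁ r₂ : Polynomial Fq) (h₁ : r₁.Monic) (h₂ : r₂.Monic)
    (d : Fin 6 → Polynomial Fq) (hd : ∀ i, polyAbs Fq (d i) ≤ polyAbs Fq (r₁ * r₂)) :
    ∃ c : Fin 6 → Polynomial Fq,
      (∀ i, (r₁ * r₂) ∣ (c i - d i)) ∧
      (∀ i, polyAbs Fq (c i) ≤ (Fintype.card Fq : ℝ) ^ 6 * polyAbs Fq (r₁ * r₂)) ∧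
      MvPolynomial.eval c ((∏ i : Fin 6, MvPolynomial.X i) * Fstar) ≠ 0 := by
  have hrm : (r₁ * r₂).Monic := h₁.mul h₂
  set r := r₁ * r₂ with hrdef
  have hr : r ≠ 0 := hrm.ne_zero
  have hq2 : 2 ≤ Fintype.card Fq := Fintype.one_lt_card
  have hq1R : (1 : ℝ) < (Fintype.card Fq : ℝ) := by exact_mod_cast Fintype.one_lt_card
  -- degree bound for Fstar
  have hFdeg : ∀ j : Fin 6, Fstar.degreeOf j ≤ 96 := by
    intro j
    rw [MvPolynomial.degreeOf_eq_sup]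
    refine Finset.sup_le fun s hs => ?_
    have h2s : (2 • s) ∈ (dualG Fq).support := by
      rw [MvPolynomial.mem_support_iff, ← hFstar, coeff_bind_sq]
      exact MvPolynomial.mem_support_iff.mp hs
    have hle : (2 • s) j ≤ (dualG Fq).degreeOf j := by
      rw [MvPolynomial.degreeOf_eq_sup]
      exact Finset.le_sup (f := fun m : Fin 6 →₀ ℕ => m j) h2s
    have h3 := le_trans hle
      ((MvPolynomial.degreeOf_le_totalDegree _ j).trans (totalDegree_dualG_le Fq))
    have h2 : (2 • s) j = 2 * s j := by simp
    omega
  set H := (∏ i : Fin 6, MvPolynomial.X i) * Fstar with hH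
  have hF0 : Fstar ≠ 0 := fun h => dualG_ne_zero Fq (by rw [← hFstar, h, map_zero])
  have hH0 : H ≠ 0 := mul_ne_zero
    (Finset.prod_ne_zero_iff.mpr fun i _ => MvPolynomial.X_ne_zero i) hF0
  have hHdeg : ∀ j : Fin 6, H.degreeOf j ≤ 102 := by
    intro j
    refine le_trans (MvPolynomial.degreeOf_mul_le _ _ _) ?_
    have hp : (∏ i : Fin 6, (MvPolynomial.X i : MvPolynomial (Fin 6) (Polynomial Fq))).degreeOf j
        ≤ 6 := by
      refine le_trans (MvPolynomial.degreeOf_le_totalDegree _ j) ?_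
      refine le_trans (MvPolynomial.totalDegree_finset_prod _ _) ?_
      simp [MvPolynomial.totalDegree_X]
    have := hFdeg j
    omega
  -- the grid
  set f : (Fin 7 → Fq) → Polynomial Fq :=
    fun v => ∑ j : Fin 7, Polynomial.C (v j) * Polynomial.X ^ (j : ℕ) with hf
  have hfcoeff : ∀ v (j : Fin 7), (f v).coeff (j : ℕ) = v j := by
    intro v j
    rw [hf, Polynomial.finset_sum_coeff]
    simp only [Polynomial.coeff_C_mul, Polynomial.coeff_X_pow, Fin.val_eq_val, mul_ite,
      mul_one, mul_zero]
    rw [Finset.sum_ite_eq Finset.univ j v]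
    simp
  have hfinj : Function.Injective f := fun v w h => funext fun j => by
    rw [← hfcoeff v j, ← hfcoeff w j, h]
  have hfdeg : ∀ v, (f v).natDegree ≤ 6 := by
    intro v
    refine Polynomial.natDegree_sum_le_of_forall_le _ _ fun j _ => ?_
    refine le_trans (Polynomial.natDegree_C_mul_le _ _) ?_
    rw [Polynomial.natDegree_X_pow]
    omega
  set S0 : Finset (Polynomial Fq) := Finset.univ.image f with hS0
  have hS0card : S0.card = Fintype.card Fq ^ 7 := by
    rw [hS0, Finset.card_image_of_injective _ hfinj, Finset.card_univ]
    simp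
  set S : Fin 6 → Finset (Polynomial Fq) := fun i => S0.image (fun k => d i + r * k) with hS
  have haffinj : ∀ i : Fin 6, Function.Injective (fun k => d i + r * k) := by
    intro i a b hab
    exact mul_left_cancel₀ hr (add_left_cancel hab)
  have hScard : ∀ i, (S i).card = Fintype.card Fq ^ 7 := by
    intro i
    rw [hS, Finset.card_image_of_injective _ (haffinj i)]
    exact hS0card
  have hdegcard : ∀ i : Fin 6, H.degreeOf i < (S i).card := by
    intro i
    rw [hScard i]
    have h128 : 128 ≤ Fintype.card Fq ^ 7 := by
      calc (128 : ℕ) = 2 ^ 7 := by norm_num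
        _ ≤ Fintype.card Fq ^ 7 := Nat.pow_le_pow_left hq2 7
    have := hHdeg i
    omega
  obtain ⟨c, hcS, hceval⟩ := grid_eval_ne_zero 6 H hH0 S hdegcard
  -- degree of d i
  have hddeg : ∀ i, (d i).natDegree ≤ r.natDegree := by
    intro i
    by_cases h0 : d i = 0
    · simp [h0]
    · have hh := hd i
      simp only [polyAbs, if_neg h0, if_neg hr] at hh
      exact (pow_le_pow_iff_right₀ hq1R).mp hh
  refine ⟨c, ?_, ?_, hceval⟩
  · intro i
    obtain ⟨k, _, hk⟩ := Finset.mem_image.mp (hcS i)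
    exact ⟨k, by rw [← hk]; ring⟩
  · intro i
    obtain ⟨k, hkS0, hk⟩ := Finset.mem_image.mp (hcS i)
    obtain ⟨v, _, hv⟩ := Finset.mem_image.mp hkS0
    have hkdeg : k.natDegree ≤ 6 := hv ▸ hfdeg v
    have hcideg : (c i).natDegree ≤ r.natDegree + 6 := by
      rw [← hk]
      refine le_trans (Polynomial.natDegree_add_le _ _) (max_le ?_ ?_)
      · exact le_trans (hddeg i) (by omega)
      · refine le_trans (Polynomial.natDegree_mul_le) ?_
        omega
    simp only [polyAbs, if_neg hr]
    by_cases h0 : c i = 0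
    · rw [if_pos h0]
      positivity
    · rw [if_neg h0]
      calc (Fintype.card Fq : ℝ) ^ (c i).natDegree
          ≤ (Fintype.card Fq : ℝ) ^ (r.natDegree + 6) :=
            pow_le_pow_right₀ hq1R.le hcideg
        _ = (Fintype.card Fq : ℝ) ^ 6 * (Fintype.card Fq : ℝ) ^ r.natDegree := by
            rw [pow_add, mul_comm]
end
end

section
/- Vanishing of oscillatory integrals with large linear frequency: let G ∈ K_∞[x_1,…,x_n] where K_∞ = F_q((t^{-1})), let H_G be the maximum absolute value of the coefficients of G, and let w⃗ ∈ K_∞^n. If ‖w⃗‖ ≥ 1 and ‖w⃗‖ > H_G, then ∫_{T^n} ψ(G(x) + w⃗·x) dx = 0. -/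
open scoped Classical

noncomputable section

open MeasureTheory Set

namespace OscAux

set_option linter.unusedSectionVars false

variable {ι : Type*} [Fintype ι] {α : Type*} [MeasurableSpace α] [AddCommGroup α]

lemma eval_image_translate (v : ι → α) (s : Set (ι → α)) (i : ι) :
    Function.eval i '' ((fun x => v + x) ⁻¹' s)
      = (fun b => v i + b) ⁻¹' (Function.eval i '' s) := by
  ext b
  constructor
  · rintro ⟨x, hx, rfl⟩
    exact ⟨v + x, hx, rfl⟩
  · rintro ⟨y, hy, hyb⟩
    refine ⟨-v + y, by simpa using hy, ?_⟩
    simp only [Function.eval, Pi.add_apply, Pi.neg_apply]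
    have : y i = v i + b := hyb
    rw [this, neg_add_cancel_left]

variable (μ : Measure α) [SigmaFinite μ]

lemma piPremeasure_translate (hinv : ∀ (a : α) (s : Set α), μ ((fun b => a + b) ⁻¹' s) = μ s)
    (v : ι → α) (s : Set (ι → α)) :
    piPremeasure (fun _ : ι => μ.toOuterMeasure) ((fun x => v + x) ⁻¹' s)
      = piPremeasure (fun _ : ι => μ.toOuterMeasure) s := by
  simp only [piPremeasure]
  refine Finset.prod_congr rfl fun i _ => ?_
  rw [eval_image_translate, Measure.toOuterMeasure_apply, Measure.toOuterMeasure_apply]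
  exact hinv (v i) _

lemma preimage_translate_nonempty_iff (v : ι → α) (s : Set (ι → α)) :
    ((fun x => v + x) ⁻¹' s).Nonempty ↔ s.Nonempty := by
  constructor
  · rintro ⟨x, hx⟩; exact ⟨v + x, hx⟩
  · rintro ⟨y, hy⟩; exact ⟨-v + y, by simpa using hy⟩

lemma omPi_translate_le (hinv : ∀ (a : α) (s : Set α), μ ((fun b => a + b) ⁻¹' s) = μ s)
    (v : ι → α) (E : Set (ι → α)) :
    OuterMeasure.pi (fun _ : ι => μ.toOuterMeasure) ((fun x => v + x) ⁻¹' E)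
      ≤ OuterMeasure.pi (fun _ : ι => μ.toOuterMeasure) E := by
  show OuterMeasure.boundedBy _ _ ≤ OuterMeasure.boundedBy _ _
  rw [OuterMeasure.boundedBy_apply, OuterMeasure.boundedBy_apply]
  refine le_iInf₂ fun t ht => ?_
  refine iInf₂_le_of_le (fun n => (fun x => v + x) ⁻¹' (t n)) ?_ ?_
  · calc (fun x => v + x) ⁻¹' E ⊆ (fun x => v + x) ⁻¹' (⋃ n, t n) := Set.preimage_mono ht
    _ = ⋃ n, (fun x => v + x) ⁻¹' (t n) := Set.preimage_iUnion
  · refine le_of_eq (tsum_congr fun n => ?_)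
    rcases (t n).eq_empty_or_nonempty with he | hne
    · simp [he]
    · rw [iSup_pos hne, iSup_pos ((preimage_translate_nonempty_iff v (t n)).2 hne)]
      exact piPremeasure_translate μ hinv v (t n)

lemma omPi_translate (hinv : ∀ (a : α) (s : Set α), μ ((fun b => a + b) ⁻¹' s) = μ s)
    (v : ι → α) (E : Set (ι → α)) :
    OuterMeasure.pi (fun _ : ι => μ.toOuterMeasure) ((fun x => v + x) ⁻¹' E)
      = OuterMeasure.pi (fun _ : ι => μ.toOuterMeasure) E := by
  refine le_antisymm (omPi_translate_le μ hinv v E) ?_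
  have h2 := omPi_translate_le μ hinv (-v) ((fun x => v + x) ⁻¹' E)
  have : (fun x => -v + x) ⁻¹' ((fun x => v + x) ⁻¹' E) = E := by
    ext x; simp [Set.mem_preimage]
  rwa [this] at h2

lemma pi_coe_eq [Nonempty ι] (E : Set (ι → α)) :
    Measure.pi (fun _ : ι => μ) E = OuterMeasure.pi (fun _ : ι => μ.toOuterMeasure) E := by
  set m : OuterMeasure (ι → α) := OuterMeasure.pi (fun _ : ι => μ.toOuterMeasure) with hm
  have hcoe : Measure.pi (fun _ : ι => μ) E = m.trim E := by
    rw [show Measure.pi (fun _ : ι => μ) E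
        = (Measure.pi (fun _ : ι => μ)).toOuterMeasure E from
        (Measure.toOuterMeasure_apply _ _).symm]
    rw [Measure.pi_def]
    rw [toMeasure_toOuterMeasure]
  rw [hcoe]
  refine le_antisymm ?_ (OuterMeasure.le_trim m E)
  refine ENNReal.le_of_forall_pos_le_add fun ε hε hfin => ?_
  have hlt0 : m E < m E + ε :=
    ENNReal.lt_add_right hfin.ne (by exact_mod_cast hε.ne')
  have hbB : m E = ⨅ (t : ℕ → Set (ι → α)) (_ : E ⊆ ⋃ n, t n),
      ∑' n, ⨆ _ : (t n).Nonempty, piPremeasure (fun _ : ι => μ.toOuterMeasure) (t n) := by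
    rw [hm]
    exact OuterMeasure.boundedBy_apply E
  rw [hbB] at hlt0
  obtain ⟨t, ht⟩ := iInf_lt_iff.mp hlt0
  obtain ⟨hcov, hlt⟩ := iInf_lt_iff.mp ht
  set C : Set (ι → α) :=
    ⋃ n, Set.pi univ (fun i => toMeasurable μ (Function.eval i '' t n)) with hC
  have hCmeas : MeasurableSet C :=
    MeasurableSet.iUnion fun n =>
      MeasurableSet.pi countable_univ fun i _ => measurableSet_toMeasurable μ _
  have hEC : E ⊆ C := by
    intro x hx
    obtain ⟨_, ⟨n, rfl⟩, hxn⟩ := hcov hx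
    exact mem_iUnion.2 ⟨n, fun i _ => subset_toMeasurable μ _ (mem_image_of_mem _ hxn)⟩
  calc m.trim E ≤ m.trim C := measure_mono hEC
    _ = m C := OuterMeasure.trim_eq m hCmeas
    _ ≤ ∑' n, m (Set.pi univ (fun i => toMeasurable μ (Function.eval i '' t n))) := by
        rw [hC]; exact measure_iUnion_le _
    _ ≤ ∑' n, ⨆ _ : (t n).Nonempty, piPremeasure (fun _ : ι => μ.toOuterMeasure) (t n) := by
        refine ENNReal.tsum_le_tsum fun n => ?_
        have h1 : m (Set.pi univ (fun i => toMeasurable μ (Function.eval i '' t n)))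
            ≤ ∏ i : ι, μ.toOuterMeasure (toMeasurable μ (Function.eval i '' t n)) :=
          OuterMeasure.pi_pi_le _ _
        have h2 : ∏ i : ι, μ.toOuterMeasure (toMeasurable μ (Function.eval i '' t n))
            = piPremeasure (fun _ : ι => μ.toOuterMeasure) (t n) := by
          simp only [piPremeasure]
          refine Finset.prod_congr rfl fun i _ => ?_
          rw [Measure.toOuterMeasure_apply, Measure.toOuterMeasure_apply,
            measure_toMeasurable]
        rcases (t n).eq_empty_or_nonempty with he | hne
        · refine le_trans (h1.trans h2.le) ?_
          rw [he]
          simp only [piPremeasure, Set.image_empty, Measure.toOuterMeasure_apply,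
            measure_empty, Finset.prod_const, Set.not_nonempty_empty]
          rw [Finset.card_univ, zero_pow Fintype.card_ne_zero]
          exact zero_le
        · rw [iSup_pos hne]
          exact h1.trans h2.le
    _ ≤ m E + ε := by rw [hbB]; exact hlt.le

lemma pi_translate [Nonempty ι]
    (hinv : ∀ (a : α) (s : Set α), μ ((fun b => a + b) ⁻¹' s) = μ s)
    (v : ι → α) (E : Set (ι → α)) :
    Measure.pi (fun _ : ι => μ) ((fun x => v + x) ⁻¹' E) = Measure.pi (fun _ : ι => μ) E := by
  rw [pi_coe_eq, pi_coe_eq, omPi_translate μ hinv v E]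

end OscAux


set_option linter.unusedSectionVars false

namespace OscAux2

variable {Fq : Type*} [Field Fq] [Fintype Fq]

/-- `OrdGE k α` means `α = 0` or the order of `α` is at least `k`. -/
def OrdGE (k : ℤ) (α : LaurentSeries Fq) : Prop := α = 0 ∨ k ≤ α.order

lemma ordGE_zero (k : ℤ) : OrdGE k (0 : LaurentSeries Fq) := Or.inl rfl

lemma ordGE_mono {k l : ℤ} (h : k ≤ l) {α : LaurentSeries Fq} (hα : OrdGE l α) : OrdGE k α :=
  hα.imp id fun h' => h.trans h'

lemma ordGE_add {k : ℤ} {a b : LaurentSeries Fq} (ha : OrdGE k a) (hb : OrdGE k b) :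
    OrdGE k (a + b) := by
  rcases ha with rfl | ha
  · simpa using hb
  rcases hb with rfl | hb
  · rw [add_zero]; exact Or.inr ha
  by_cases hab : a + b = 0
  · exact Or.inl hab
  · exact Or.inr (le_trans (le_min ha hb) (HahnSeries.min_order_le_order_add hab))

lemma ordGE_neg {k : ℤ} {a : LaurentSeries Fq} (ha : OrdGE k a) : OrdGE k (-a) := by
  rcases ha with rfl | ha
  · simpa using ordGE_zero k
  · rcases eq_or_ne a 0 with rfl | h
    · simpa using ordGE_zero k
    · exact Or.inr (by rwa [HahnSeries.order_neg])

lemma ordGE_mul {k l : ℤ} {a b : LaurentSeries Fq} (ha : OrdGE k a) (hb : OrdGE l b) :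
    OrdGE (k + l) (a * b) := by
  rcases ha with rfl | ha
  · simpa using ordGE_zero (k + l)
  rcases hb with rfl | hb
  · simpa using ordGE_zero (k + l)
  rcases eq_or_ne a 0 with rfl | ha0
  · simpa using ordGE_zero (k + l)
  rcases eq_or_ne b 0 with rfl | hb0
  · simpa using ordGE_zero (k + l)
  exact Or.inr (by rw [HahnSeries.order_mul ha0 hb0]; exact add_le_add ha hb)

lemma ordGE_sum {k : ℤ} {β : Type*} (s : Finset β) (f : β → LaurentSeries Fq)
    (h : ∀ b ∈ s, OrdGE k (f b)) : OrdGE k (∑ b ∈ s, f b) :=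
  Finset.sum_induction f (OrdGE k) (fun _ _ => ordGE_add) (ordGE_zero k) h

lemma ordGE_one : OrdGE 0 (1 : LaurentSeries Fq) := Or.inr (by rw [HahnSeries.order_one])

lemma ordGE_pow {a : LaurentSeries Fq} (ha : OrdGE 0 a) (j : ℕ) : OrdGE 0 (a ^ j) := by
  induction j with
  | zero => simpa using ordGE_one
  | succ j ih => rw [pow_succ]; simpa using ordGE_mul ih ha

lemma ordGE_prod {β : Type*} (s : Finset β) (f : β → LaurentSeries Fq)
    (h : ∀ b ∈ s, OrdGE 0 (f b)) : OrdGE 0 (∏ b ∈ s, f b) :=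
  Finset.prod_induction f (OrdGE 0)
    (fun a b ha hb => by simpa using ordGE_mul ha hb) ordGE_one h

lemma coeff_eq_zero_of_ordGE {k : ℤ} {α : LaurentSeries Fq} (h : OrdGE k α) {i : ℤ}
    (hi : i < k) : α.coeff i = 0 := by
  rcases h with rfl | h
  · simp
  · exact HahnSeries.coeff_eq_zero_of_lt_order (lt_of_lt_of_le hi h)

lemma one_lt_qR : (1 : ℝ) < (Fintype.card Fq : ℝ) := by
  exact_mod_cast Fintype.one_lt_card

lemma absv_nonneg (α : Kinf Fq) : 0 ≤ absv Fq α := by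
  unfold absv
  split_ifs
  · exact le_refl 0
  · positivity

lemma absv_lt_one_iff (α : Kinf Fq) : absv Fq α < 1 ↔ OrdGE 1 α := by
  unfold absv OrdGE
  split_ifs with h
  · simp [h]
  · rw [or_iff_right h]
    rw [show (1 : ℝ) = (Fintype.card Fq : ℝ) ^ (0 : ℤ) by simp]
    rw [zpow_lt_zpow_iff_right₀ one_lt_qR]
    omega

lemma absv_lt_absv {α β : Kinf Fq} (hβ : β ≠ 0) (h : absv Fq α < absv Fq β) :
    OrdGE (β.order + 1) α := by
  unfold absv at h
  rw [if_neg hβ] at h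
  split_ifs at h with hα
  · exact Or.inl hα
  · rw [zpow_lt_zpow_iff_right₀ one_lt_qR] at h
    exact Or.inr (by omega)

lemma absv_one_le {α : Kinf Fq} (h : (1:ℝ) ≤ absv Fq α) : α ≠ 0 ∧ α.order ≤ 0 := by
  unfold absv at h
  split_ifs at h with hα
  · norm_num at h
  · refine ⟨hα, ?_⟩
    rw [show (1 : ℝ) = (Fintype.card Fq : ℝ) ^ (0 : ℤ) by simp,
      zpow_le_zpow_iff_right₀ one_lt_qR] at h
    omega

end OscAux2


namespace OscAux3
set_option linter.unusedSectionVars false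

/-- `e(k/p)` for `k : ZMod p`. -/
def eZ (p : ℕ) (k : ZMod p) : ℂ :=
  Complex.exp (2 * Real.pi * Complex.I * (k.val : ℂ) / p)

lemma eZ_zero (p : ℕ) : eZ p 0 = 1 := by
  unfold eZ
  rw [ZMod.val_zero]
  simp

lemma eZ_add (p : ℕ) [NeZero p] (j k : ZMod p) : eZ p (j + k) = eZ p j * eZ p k := by
  have hp : (p : ℂ) ≠ 0 := by exact_mod_cast (NeZero.ne p)
  unfold eZ
  rw [← Complex.exp_add]
  have hv : j.val + k.val = (j + k).val + p * ((j.val + k.val) / p) := by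
    rw [ZMod.val_add]
    exact (Nat.mod_add_div _ _).symm
  have hcast : ((j.val : ℂ) + (k.val : ℂ))
      = ((j + k).val : ℂ) + (p : ℂ) * (((j.val + k.val) / p : ℕ) : ℂ) := by
    exact_mod_cast congrArg (fun n : ℕ => (n : ℂ)) hv
  set d : ℕ := (j.val + k.val) / p with hd
  have h1 : 2 * (Real.pi : ℂ) * Complex.I * ((p : ℂ) * (d : ℂ)) / p
      = ((d : ℤ) : ℂ) * (2 * (Real.pi : ℂ) * Complex.I) := by
    rw [mul_comm (p : ℂ) (d : ℂ), ← mul_assoc, mul_div_assoc, div_self hp, mul_one]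
    push_cast
    ring
  have hsub : (((j + k).val : ℕ) : ℂ) = (j.val : ℂ) + (k.val : ℂ) - (p : ℂ) * (d : ℂ) := by
    linear_combination (-1 : ℂ) * hcast
  have harg : 2 * (Real.pi : ℂ) * Complex.I * (((j + k).val : ℕ) : ℂ) / p
      = (2 * (Real.pi : ℂ) * Complex.I * (j.val : ℂ) / p
          + 2 * (Real.pi : ℂ) * Complex.I * (k.val : ℂ) / p)
        + ((-(d : ℤ) : ℤ) : ℂ) * (2 * (Real.pi : ℂ) * Complex.I) := by
    rw [hsub]
    have e1 : 2 * (Real.pi : ℂ) * Complex.I * ((j.val : ℂ) + (k.val : ℂ) - (p : ℂ) * (d : ℂ)) / p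
        = 2 * (Real.pi : ℂ) * Complex.I * (j.val : ℂ) / p
          + 2 * (Real.pi : ℂ) * Complex.I * (k.val : ℂ) / p
          - 2 * (Real.pi : ℂ) * Complex.I * ((p : ℂ) * (d : ℂ)) / p := by ring
    rw [e1, h1]
    push_cast
    ring
  rw [harg, Complex.exp_add, Complex.exp_int_mul_two_pi_mul_I, mul_one]

lemma eZ_ne_one {p : ℕ} (hp : 1 < p) {k : ZMod p} (hk : k ≠ 0) : eZ p k ≠ 1 := by
  haveI : NeZero p := ⟨by omega⟩
  intro h
  unfold eZ at h
  rw [Complex.exp_eq_one_iff] at h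
  obtain ⟨m, hm⟩ := h
  have hp0 : (p : ℂ) ≠ 0 := by exact_mod_cast (NeZero.ne p)
  have h2 : (2 * (Real.pi : ℂ) * Complex.I) ≠ 0 := by
    simp [Real.pi_ne_zero, Complex.I_ne_zero, Complex.ofReal_ne_zero]
  have hval : (k.val : ℂ) = (m : ℂ) * p := by
    rw [mul_div_assoc, mul_comm (m : ℂ) _] at hm
    have h4 := mul_left_cancel₀ h2 hm
    rwa [div_eq_iff hp0] at h4
  have hZ : (k.val : ℤ) = m * p := by exact_mod_cast hval
  have h1 : k.val ≠ 0 := fun h0 => hk ((ZMod.val_eq_zero k).mp h0)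
  have h3 : k.val < p := ZMod.val_lt k
  have : 0 < (k.val : ℤ) := by exact_mod_cast Nat.pos_of_ne_zero h1
  have : (k.val : ℤ) < p := by exact_mod_cast h3
  have hpZ : (0:ℤ) < p := by exact_mod_cast (by omega : 0 < p)
  rcases le_or_gt m 0 with hm0 | hm0
  · nlinarith
  · have h5 : (1:ℤ) ≤ m := hm0
    nlinarith

variable {Fq : Type*} [Field Fq] [Fintype Fq]

/-- The trace to the prime field of a finite field. -/
def trMap (Fq : Type*) [Field Fq] [Fintype Fq] (a : Fq) : ZMod (ringChar Fq) :=
  haveI : CharP Fq (ringChar Fq) := ringChar.charP Fq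
  letI : Algebra (ZMod (ringChar Fq)) Fq := ZMod.algebra _ _
  Algebra.trace (ZMod (ringChar Fq)) Fq a

lemma psiChar_eq (α : Kinf Fq) :
    psiChar Fq α = eZ (ringChar Fq) (trMap Fq (α.coeff (1 : ℤ))) := rfl

lemma ringChar_prime : (ringChar Fq).Prime := by
  haveI : CharP Fq (ringChar Fq) := ringChar.charP Fq
  exact CharP.char_is_prime Fq (ringChar Fq)

lemma trMap_add (a b : Fq) : trMap Fq (a + b) = trMap Fq a + trMap Fq b := by
  unfold trMap
  exact map_add _ a b

lemma trMap_zero : trMap Fq (0 : Fq) = 0 := by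
  unfold trMap
  exact map_zero _

lemma psiChar_add (a b : Kinf Fq) : psiChar Fq (a + b) = psiChar Fq a * psiChar Fq b := by
  haveI : NeZero (ringChar Fq) := ⟨(ringChar_prime (Fq := Fq)).ne_zero⟩
  rw [psiChar_eq, psiChar_eq, psiChar_eq]
  rw [show (a + b).coeff (1:ℤ) = a.coeff 1 + b.coeff 1 from HahnSeries.coeff_add]
  rw [trMap_add, eZ_add]

lemma psiChar_one_of_coeff_zero {α : Kinf Fq} (h : α.coeff (1:ℤ) = 0) : psiChar Fq α = 1 := by
  rw [psiChar_eq, h, trMap_zero, eZ_zero]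

lemma psiChar_ne_zero (α : Kinf Fq) : psiChar Fq α ≠ 0 := by
  rw [psiChar_eq]; exact Complex.exp_ne_zero _

end OscAux3


namespace OscAux2

variable {Fq : Type*} [Field Fq] [Fintype Fq]

lemma ordGE_pow_sub {k : ℤ} (hk : 0 ≤ k) {a δ : LaurentSeries Fq}
    (ha : OrdGE 0 a) (hδ : OrdGE k δ) (j : ℕ) :
    OrdGE k ((δ + a) ^ j - a ^ j) := by
  induction j with
  | zero => simpa using ordGE_zero k
  | succ j ih =>
    have hda : OrdGE 0 (δ + a) := ordGE_add (ordGE_mono hk hδ) ha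
    have key : (δ + a) ^ (j + 1) - a ^ (j + 1)
        = (δ + a) * ((δ + a) ^ j - a ^ j) + δ * a ^ j := by ring
    rw [key]
    refine ordGE_add ?_ ?_
    · have := ordGE_mul hda ih
      simpa using this
    · have := ordGE_mul hδ (ordGE_pow ha j)
      simpa using this

lemma eval_translate_ordGE {n : ℕ} (G : MvPolynomial (Fin n) (Kinf Fq)) {o : ℤ} (ho : o ≤ 0)
    (hcoeff : ∀ m : Fin n →₀ ℕ, OrdGE (o + 1) (MvPolynomial.coeff m G))
    (x : Fin n → Kinf Fq) (hx : ∀ i, OrdGE 1 (x i)) (i₀ : Fin n) {δ : Kinf Fq}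
    (hδ : OrdGE (1 - o) δ) :
    OrdGE 2 (MvPolynomial.eval (Pi.single i₀ δ + x) G - MvPolynomial.eval x G) := by
  set x' : Fin n → Kinf Fq := Pi.single i₀ δ + x with hx'
  have hx'eq : ∀ i, i ≠ i₀ → x' i = x i := by
    intro i hi
    simp [hx', Pi.single_eq_of_ne hi]
  have hx'i₀ : x' i₀ = δ + x i₀ := by simp [hx']
  have hx'T : ∀ i, OrdGE 1 (x' i) := by
    intro i
    rcases eq_or_ne i i₀ with rfl | hi
    · rw [hx'i₀]
      exact ordGE_add (ordGE_mono (by omega) hδ) (hx i)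
    · rw [hx'eq i hi]; exact hx i
  rw [MvPolynomial.eval_eq' x' G, MvPolynomial.eval_eq' x G, ← Finset.sum_sub_distrib]
  refine ordGE_sum _ _ fun d _ => ?_
  rw [← mul_sub]
  have hprod : OrdGE (1 - o) (∏ i, x' i ^ d i - ∏ i, x i ^ d i) := by
    rw [← Finset.mul_prod_erase Finset.univ _ (Finset.mem_univ i₀),
      ← Finset.mul_prod_erase Finset.univ (fun i => x i ^ d i) (Finset.mem_univ i₀)]
    have hRe : ∏ i ∈ Finset.univ.erase i₀, x' i ^ d i
        = ∏ i ∈ Finset.univ.erase i₀, x i ^ d i := by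
      refine Finset.prod_congr rfl fun i hi => ?_
      rw [hx'eq i (Finset.ne_of_mem_erase hi)]
    rw [hRe, ← sub_mul]
    have hR : OrdGE 0 (∏ i ∈ Finset.univ.erase i₀, x i ^ d i) :=
      ordGE_prod _ _ fun i _ => ordGE_pow (ordGE_mono (by omega) (hx i)) (d i)
    have hdiff : OrdGE (1 - o) (x' i₀ ^ d i₀ - x i₀ ^ d i₀) := by
      rw [hx'i₀]
      exact ordGE_pow_sub (by omega) (ordGE_mono (by omega) (hx i₀)) hδ (d i₀)
    have := ordGE_mul hdiff hR
    simpa using this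
  have := ordGE_mul (hcoeff d) hprod
  have h2 : (2 : ℤ) = (o + 1) + (1 - o) := by ring
  rw [h2]
  exact this

lemma coeff_one_mul_single {x : LaurentSeries Fq} {γ : Fq} {a b : ℤ} (h : a + b = 1) :
    (x * HahnSeries.single b γ).coeff 1 = x.coeff a * γ := by
  rw [← h]
  exact HahnSeries.coeff_mul_single_add

lemma sum_single_mul {n : ℕ} (w : Fin n → Kinf Fq) (i₀ : Fin n) (δ : Kinf Fq) (x : Fin n → Kinf Fq) :
    ∑ i, w i * ((Pi.single i₀ δ : Fin n → Kinf Fq) + x) i = w i₀ * δ + ∑ i, w i * x i := by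
  have : ∀ i, w i * ((Pi.single i₀ δ : Fin n → Kinf Fq) + x) i
      = w i * (Pi.single i₀ δ : Fin n → Kinf Fq) i + w i * x i := by
    intro i; rw [Pi.add_apply, mul_add]
  simp_rw [this]
  rw [Finset.sum_add_distrib]
  congr 1
  rw [Finset.sum_eq_single i₀]
  · rw [Pi.single_eq_same]
  · intro b _ hb
    rw [Pi.single_eq_of_ne hb, mul_zero]
  · intro h
    exact absurd (Finset.mem_univ i₀) h

end OscAux2

open MeasureTheory

/-- vanishing of oscillatory integrals with large linear frequency:
let `G ∈ K_∞[x₁,…,xₙ]`, `H_G` the maximum absolute value of its coefficients, and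
`w ∈ K_∞ⁿ`.  If `‖w‖ ≥ 1` and `‖w‖ > H_G`, then `∫_{Tⁿ} ψ(G(x) + w·x) dx = 0`, where the
measure is the product of the Haar measure `μ` normalised by `μ(T) = 1`. -/
theorem oscillatory_integral_vanishing (Fq : Type*) [Field Fq] [Fintype Fq]
    [MeasurableSpace (Kinf Fq)] (μ : Measure (Kinf Fq)) [SigmaFinite μ]
    (hinv : ∀ (a : Kinf Fq) (s : Set (Kinf Fq)), μ ((fun β => a + β) ⁻¹' s) = μ s)
    (hT : μ {α : Kinf Fq | absv Fq α < 1} = 1)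
    (n : ℕ) (G : MvPolynomial (Fin n) (Kinf Fq)) (w : Fin n → Kinf Fq)
    (hw : 1 ≤ Finset.univ.sup (fun i => (absv Fq (w i)).toNNReal))
    (hG : ∀ m : Fin n →₀ ℕ,
      (absv Fq (MvPolynomial.coeff m G)).toNNReal <
        Finset.univ.sup (fun i => (absv Fq (w i)).toNNReal)) :
    (∫ x in {x : Fin n → Kinf Fq | ∀ i, absv Fq (x i) < 1},
        psiChar Fq (MvPolynomial.eval x G + ∑ i, w i * x i)
        ∂(Measure.pi fun _ : Fin n => μ)) = 0 := by
  classical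
  rcases Nat.eq_zero_or_pos n with rfl | hn
  · exfalso
    rw [Finset.univ_eq_empty, Finset.sup_empty] at hw
    simp at hw
  haveI : Nonempty (Fin n) := ⟨⟨0, hn⟩⟩
  obtain ⟨i₀, -, hsup⟩ := Finset.exists_mem_eq_sup Finset.univ Finset.univ_nonempty
      (fun i => (absv Fq (w i)).toNNReal)
  rw [hsup] at hw hG
  have habs1 : (1 : ℝ) ≤ absv Fq (w i₀) := by
    have h0 : (0:ℝ) ≤ absv Fq (w i₀) := OscAux2.absv_nonneg _
    have h1 : Real.toNNReal 1 ≤ Real.toNNReal (absv Fq (w i₀)) := by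
      rw [Real.toNNReal_one]; exact hw
    exact (Real.toNNReal_le_toNNReal_iff h0).mp h1
  obtain ⟨hw0, ho⟩ := OscAux2.absv_one_le habs1
  set o : ℤ := (w i₀).order with hoo
  have hGo : ∀ m : Fin n →₀ ℕ, OscAux2.OrdGE (o + 1) (MvPolynomial.coeff m G) := by
    intro m
    have hpos : (0:ℝ) < absv Fq (w i₀) := lt_of_lt_of_le one_pos habs1
    exact OscAux2.absv_lt_absv hw0 ((Real.toNNReal_lt_toNNReal_iff hpos).mp (hG m))
  -- character setup
  set p := ringChar Fq with hpdef
  have hpprime : p.Prime := OscAux3.ringChar_prime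
  haveI : NeZero p := ⟨hpprime.ne_zero⟩
  have hc₀ : (w i₀).coeff o ≠ 0 := HahnSeries.coeff_order_eq_zero.not.2 hw0
  haveI : CharP Fq (ringChar Fq) := ringChar.charP Fq
  letI : Algebra (ZMod (ringChar Fq)) Fq := ZMod.algebra _ _
  obtain ⟨γ, hγ⟩ := FiniteField.trace_to_zmod_nondegenerate Fq hc₀
  have hγ0 : γ ≠ 0 := by rintro rfl; simp at hγ
  set δ : Kinf Fq := HahnSeries.single (1 - o) γ with hδdef
  have hδ0 : δ ≠ 0 := HahnSeries.single_ne_zero hγ0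
  have hδord : OscAux2.OrdGE (1 - o) δ :=
    Or.inr (le_of_eq (HahnSeries.order_single hγ0).symm)
  have hδ1 : OscAux2.OrdGE 1 δ := OscAux2.ordGE_mono (by omega) hδord
  set v : Fin n → Kinf Fq := Pi.single i₀ δ with hvdef
  set c : ℂ := psiChar Fq (w i₀ * δ) with hcdef
  have hwδcoeff : (w i₀ * δ).coeff 1 = (w i₀).coeff o * γ := by
    rw [hδdef]
    exact OscAux2.coeff_one_mul_single (by ring)
  set k₀ : ZMod p := OscAux3.trMap Fq ((w i₀).coeff o * γ) with hk₀def
  have hk₀ne : k₀ ≠ 0 := hγ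
  have hc_eq : c = OscAux3.eZ p k₀ := by
    rw [hcdef, OscAux3.psiChar_eq, hwδcoeff]
  have hc1 : c ≠ 1 := by rw [hc_eq]; exact OscAux3.eZ_ne_one hpprime.one_lt hk₀ne
  have hc0 : c ≠ 0 := by rw [hcdef]; exact OscAux3.psiChar_ne_zero _
  -- the sets and functions
  set S : Set (Fin n → Kinf Fq) := {x | ∀ i, absv Fq (x i) < 1} with hSdef
  set f : (Fin n → Kinf Fq) → ℂ :=
    fun x => psiChar Fq (MvPolynomial.eval x G + ∑ i, w i * x i) with hfdef
  set π : Measure (Fin n → Kinf Fq) := Measure.pi fun _ : Fin n => μ with hπdef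
  set ν : Measure (Fin n → Kinf Fq) := π.restrict S with hνdef
  have hSmem : ∀ x : Fin n → Kinf Fq, x ∈ S ↔ ∀ i, OscAux2.OrdGE 1 (x i) := by
    intro x
    rw [hSdef]
    exact forall_congr' fun i => OscAux2.absv_lt_one_iff (x i)
  have hiff : ∀ α : Kinf Fq, OscAux2.OrdGE 1 (δ + α) ↔ OscAux2.OrdGE 1 α := by
    intro α
    constructor
    · intro h
      have h2 := OscAux2.ordGE_add (OscAux2.ordGE_neg hδ1) h
      rwa [neg_add_cancel_left] at h2
    · exact fun h => OscAux2.ordGE_add hδ1 h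
  have hStab : ∀ x : Fin n → Kinf Fq, v + x ∈ S ↔ x ∈ S := by
    intro x
    rw [hSmem, hSmem]
    refine forall_congr' fun i => ?_
    rcases eq_or_ne i i₀ with rfl | hi
    · rw [show (v + x) i = δ + x i by rw [Pi.add_apply, hvdef, Pi.single_eq_same]]
      exact hiff (x i)
    · rw [show (v + x) i = x i by rw [Pi.add_apply, hvdef, Pi.single_eq_of_ne hi, zero_add]]
  have hRel : ∀ x ∈ S, f (v + x) = c * f x := by
    intro x hx
    have hxT : ∀ i, OscAux2.OrdGE 1 (x i) := (hSmem x).1 hx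
    have hΔ : OscAux2.OrdGE 2
        (MvPolynomial.eval (v + x) G - MvPolynomial.eval x G) := by
      rw [hvdef]
      exact OscAux2.eval_translate_ordGE G ho hGo x hxT i₀ hδord
    have hlin : ∑ i, w i * (v + x) i = w i₀ * δ + ∑ i, w i * x i := by
      rw [hvdef]
      exact OscAux2.sum_single_mul w i₀ δ x
    have hsplit : MvPolynomial.eval (v + x) G + ∑ i, w i * (v + x) i
        = (MvPolynomial.eval x G + ∑ i, w i * x i)
          + ((MvPolynomial.eval (v + x) G - MvPolynomial.eval x G) + w i₀ * δ) := by
      rw [hlin]; ring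
    show psiChar Fq (MvPolynomial.eval (v + x) G + ∑ i, w i * (v + x) i)
        = c * psiChar Fq (MvPolynomial.eval x G + ∑ i, w i * x i)
    rw [hsplit,
      OscAux3.psiChar_add (MvPolynomial.eval x G + ∑ i, w i * x i)
        ((MvPolynomial.eval (v + x) G - MvPolynomial.eval x G) + w i₀ * δ),
      OscAux3.psiChar_add (MvPolynomial.eval (v + x) G - MvPolynomial.eval x G) (w i₀ * δ),
      OscAux3.psiChar_one_of_coeff_zero
        (OscAux2.coeff_eq_zero_of_ordGE hΔ (by norm_num)),
      one_mul, ← hcdef]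
    ring
  -- measure invariance and finiteness
  have hπinv : ∀ (E : Set (Fin n → Kinf Fq)), π ((fun x => v + x) ⁻¹' E) = π E := by
    intro E
    rw [hπdef]
    exact OscAux.pi_translate μ hinv v E
  have hπS : π S ≤ 1 := by
    have hSbox : S ⊆ Set.pi Set.univ
        (fun _ : Fin n => toMeasurable μ {α : Kinf Fq | absv Fq α < 1}) := by
      intro x hx i _
      exact subset_toMeasurable _ _ (hx i)
    refine le_trans (measure_mono hSbox) ?_
    rw [hπdef, Measure.pi_pi]
    simp [measure_toMeasurable, hT]
  haveI : IsFiniteMeasure ν := by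
    refine ⟨?_⟩
    rw [hνdef, Measure.restrict_apply_univ]
    exact lt_of_le_of_lt hπS (by norm_num)
  by_cases hInt : Integrable f ν
  swap
  · exact integral_undef hInt
  have hfm := hInt.aestronglyMeasurable
  set g := hfm.mk f with hgdef
  have hgm : StronglyMeasurable g := hfm.stronglyMeasurable_mk
  have hfg : f =ᵐ[ν] g := hfm.ae_eq_mk
  have hmeasg : Measurable g := hgm.measurable
  set Z : Finset ℂ := Finset.image (OscAux3.eZ p) Finset.univ with hZdef
  have hfZ : ∀ x, f x ∈ Z := by
    intro x
    rw [hfdef]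
    simp only
    rw [OscAux3.psiChar_eq]
    exact Finset.mem_image_of_mem _ (Finset.mem_univ _)
  set E : ℂ → Set (Fin n → Kinf Fq) := fun z => g ⁻¹' {z} with hEdef
  have hEmeas : ∀ z, MeasurableSet (E z) := fun z => hmeasg (measurableSet_singleton z)
  set A : ℂ → Set (Fin n → Kinf Fq) := fun z => {x | x ∈ S ∧ f x = z} with hAdef
  have hνle : ∀ X : Set (Fin n → Kinf Fq), π (X ∩ S) ≤ ν X := by
    intro X
    have h1 : X ∩ S ⊆ toMeasurable ν X ∩ S :=
      Set.inter_subset_inter_left S (subset_toMeasurable ν X)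
    refine le_trans (measure_mono h1) (le_of_eq ?_)
    calc π (toMeasurable ν X ∩ S)
        = ν (toMeasurable ν X) := by
          rw [hνdef, Measure.restrict_apply (measurableSet_toMeasurable _ _)]
      _ = ν X := measure_toMeasurable X
  have hN0 : ν {x | ¬ f x = g x} = 0 := ae_iff.mp hfg
  have hNS : π ({x | ¬ f x = g x} ∩ S) = 0 :=
    le_antisymm (le_trans (hνle _) (le_of_eq hN0)) zero_le
  have hAE : ∀ z, π (A z) = ν (E z) := by
    intro z
    have h1 : ν (E z) = π (E z ∩ S) := by
      rw [hνdef, Measure.restrict_apply (hEmeas z)]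
    have hsub1 : A z ⊆ (E z ∩ S) ∪ ({x | ¬ f x = g x} ∩ S) := by
      rintro x ⟨hxS, hxf⟩
      by_cases hfgx : f x = g x
      · exact Or.inl ⟨by rw [hEdef]; simp [← hfgx, hxf], hxS⟩
      · exact Or.inr ⟨hfgx, hxS⟩
    have hsub2 : E z ∩ S ⊆ A z ∪ ({x | ¬ f x = g x} ∩ S) := by
      rintro x ⟨hxE, hxS⟩
      by_cases hfgx : f x = g x
      · refine Or.inl ⟨hxS, ?_⟩
        rw [hfgx]
        simpa [hEdef] using hxE
      · exact Or.inr ⟨hfgx, hxS⟩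
    refine le_antisymm ?_ ?_
    · calc π (A z) ≤ π ((E z ∩ S) ∪ ({x | ¬ f x = g x} ∩ S)) := measure_mono hsub1
        _ ≤ π (E z ∩ S) + π ({x | ¬ f x = g x} ∩ S) := measure_union_le _ _
        _ = ν (E z) := by rw [hNS, add_zero, h1]
    · calc ν (E z) = π (E z ∩ S) := h1
        _ ≤ π (A z ∪ ({x | ¬ f x = g x} ∩ S)) := measure_mono hsub2
        _ ≤ π (A z) + π ({x | ¬ f x = g x} ∩ S) := measure_union_le _ _
        _ = π (A z) := by rw [hNS, add_zero]
  have hAtrans : ∀ z : ℂ, π (A z) = π (A (c * z)) := by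
    intro z
    have hpre : (fun x => v + x) ⁻¹' (A (c * z)) = A z := by
      ext x
      simp only [hAdef, Set.mem_preimage, Set.mem_setOf_eq]
      constructor
      · rintro ⟨h1, h2⟩
        have hxS : x ∈ S := (hStab x).mp h1
        refine ⟨hxS, ?_⟩
        rw [hRel x hxS] at h2
        exact mul_left_cancel₀ hc0 h2
      · rintro ⟨h1, h2⟩
        exact ⟨(hStab x).mpr h1, by rw [hRel x h1, h2]⟩
    rw [← hpre, hπinv]
  have hgsum : g =ᵐ[ν] fun x => ∑ z ∈ Z, Set.indicator (E z) (fun _ => z) x := by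
    filter_upwards [hfg] with x hx
    have hgZ : g x ∈ Z := hx ▸ hfZ x
    have hterm : ∀ z ∈ Z, Set.indicator (E z) (fun _ => z) x
        = if z = g x then z else 0 := by
      intro z _
      rw [Set.indicator_apply]
      congr 1
      simp [hEdef, eq_comm]
    rw [Finset.sum_congr rfl hterm, Finset.sum_ite_eq' Z (g x) (fun z => z), if_pos hgZ]
  have hIsum : ∫ x, f x ∂ν = ∑ z ∈ Z, (π (A z)).toReal • z := by
    rw [integral_congr_ae hfg, integral_congr_ae hgsum]
    rw [integral_finset_sum]
    · exact Finset.sum_congr rfl fun z _ => by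
        rw [integral_indicator_const z (hEmeas z), measureReal_def, hAE z]
    · exact fun z _ => (integrable_const z).indicator (hEmeas z)
  -- closure of Z under multiplication by c and c⁻¹
  set ci : ℂ := OscAux3.eZ p (-k₀) with hcidef
  have hcic : ci * c = 1 := by
    rw [hcidef, hc_eq, ← OscAux3.eZ_add, neg_add_cancel, OscAux3.eZ_zero]
  have hmulZ : ∀ z ∈ Z, c * z ∈ Z := by
    intro z hz
    obtain ⟨k, -, rfl⟩ := Finset.mem_image.mp hz
    rw [hc_eq, ← OscAux3.eZ_add]
    exact Finset.mem_image_of_mem _ (Finset.mem_univ _)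
  have hmulZi : ∀ z ∈ Z, ci * z ∈ Z := by
    intro z hz
    obtain ⟨k, -, rfl⟩ := Finset.mem_image.mp hz
    rw [hcidef, ← OscAux3.eZ_add]
    exact Finset.mem_image_of_mem _ (Finset.mem_univ _)
  have hcI : c * (∑ z ∈ Z, (π (A z)).toReal • z) = ∑ z ∈ Z, (π (A z)).toReal • z := by
    rw [Finset.mul_sum]
    have step1 : ∀ z ∈ Z, c * ((π (A z)).toReal • z)
        = (π (A (c * z))).toReal • (c * z) := by
      intro z _
      rw [← hAtrans z, mul_smul_comm]
    rw [Finset.sum_congr rfl step1]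
    refine Finset.sum_nbij' (fun z => c * z) (fun z => ci * z) ?_ ?_ ?_ ?_ ?_
    · exact hmulZ
    · exact hmulZi
    · intro a _
      show ci * (c * a) = a
      rw [← mul_assoc, hcic, one_mul]
    · intro a _
      show c * (ci * a) = a
      rw [← mul_assoc, mul_comm c ci, hcic, one_mul]
    · intro a _
      rfl
  have hfinal : (c - 1) * (∫ x, f x ∂ν) = 0 := by
    rw [hIsum, sub_mul, one_mul, hcI, sub_self]
  rcases mul_eq_zero.mp hfinal with h | h
  · exact absurd (sub_eq_zero.mp h) hc1
  · exact h
end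
end
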